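/- arXiv:2312.16953 — 9 statements merged into one kernel-verified Lean document; each statement's English description precedes it below -/
import Mathlib

section
/- Assume the positivity assumption G₀ ≥ δ P-a.s. Then for every σ(W)-measurable Q : Ω → ℝ with values in [0,1], δ·E[(Q − Q₀)²] ≤ E[A·(Y − Q)²] − E[A·(Y − Q₀)²] ≤ E[(Q − Q₀)²]; that is, the loss-based dissimilarity d₀(Q,Q₀) = E[A(Y−Q)²] − E[A(Y−Q₀)²] is equivalent (up to the constants δ and 1) to the squared L²(P)-distance ‖Q − Q₀‖²_{L²(P)} (the paper's claim that since G₀ is bounded away from zero, the loss-based dissimilarity is equivalent with ‖Q − Q₀‖²_{P₀}). -/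
/-!
Expanding `(Y - Q)² = (Y - Q₀)² + (Q - Q₀)² + 2 (Y - Q₀)(Q₀ - Q)` and using that the
weighted residual `A (Y - Q₀)` is orthogonal to the `σ(W)`-measurable function `Q₀ - Q`, the
dissimilarity equals `E[A (Q - Q₀)²]`. Since `(Q - Q₀)²` is `σ(W)`-measurable, this is
`E[G₀ (Q - Q₀)²]`, and `δ ≤ G₀ ≤ 1` gives both bounds.
-/

open MeasureTheory

section

variable {Ω : Type*} {m m₀ : MeasurableSpace Ω} {μ : Measure[m₀] Ω}

theorem integral_mul_sq_sub_sub_integral_mul_sq_sub {A Y Q Q₀ : Ω → ℝ}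
    (h₀ : Integrable (fun ω => A ω * (Y ω - Q₀ ω) ^ 2) μ)
    (hQ : Integrable (fun ω => A ω * (Q ω - Q₀ ω) ^ 2) μ)
    (hcross : Integrable (fun ω => A ω * (Y ω - Q₀ ω) * (Q₀ ω - Q ω)) μ)
    (horth : ∫ ω, A ω * (Y ω - Q₀ ω) * (Q₀ ω - Q ω) ∂μ = 0) :
    ∫ ω, A ω * (Y ω - Q ω) ^ 2 ∂μ - ∫ ω, A ω * (Y ω - Q₀ ω) ^ 2 ∂μ =
      ∫ ω, A ω * (Q ω - Q₀ ω) ^ 2 ∂μ := by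
  have hexpand : (fun ω => A ω * (Y ω - Q ω) ^ 2) = fun ω =>
      A ω * (Y ω - Q₀ ω) ^ 2 + A ω * (Q ω - Q₀ ω) ^ 2
        + 2 * (A ω * (Y ω - Q₀ ω) * (Q₀ ω - Q ω)) := by
    funext ω; ring
  have h₀Q : Integrable
      (fun ω => A ω * (Y ω - Q₀ ω) ^ 2 + A ω * (Q ω - Q₀ ω) ^ 2) μ := h₀.add hQ
  rw [hexpand, integral_add h₀Q (hcross.const_mul 2), integral_add h₀ hQ, integral_const_mul,
    horth]
  ring

theorem integral_mul_eq_integral_condExp_mul [IsFiniteMeasure μ] (hm : m ≤ m₀)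
    {A g : Ω → ℝ} {c : ℝ} (hA : Integrable A μ) (hg : StronglyMeasurable[m] g)
    (hg_bound : ∀ ω, ‖g ω‖ ≤ c) :
    ∫ ω, A ω * g ω ∂μ = ∫ ω, μ[A|m] ω * g ω ∂μ := by
  simp_rw [mul_comm (A _), mul_comm (μ[A|m] _)]
  rw [← integral_condExp hm]
  exact integral_congr_ae
    (condExp_stronglyMeasurable_mul_of_bound hm hg hA c (.of_forall hg_bound))

theorem mul_integral_le_integral_mul_of_le_condExp [IsFiniteMeasure μ] (hm : m ≤ m₀)
    {A g : Ω → ℝ} {c δ : ℝ} (hA : Integrable A μ) (hg : StronglyMeasurable[m] g)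
    (hg_nonneg : ∀ ω, 0 ≤ g ω) (hg_bound : ∀ ω, ‖g ω‖ ≤ c)
    (hδ : ∀ᵐ ω ∂μ, δ ≤ μ[A|m] ω) :
    δ * ∫ ω, g ω ∂μ ≤ ∫ ω, A ω * g ω ∂μ := by
  have hg₀ : AEStronglyMeasurable g μ := (hg.mono hm).aestronglyMeasurable
  rw [integral_mul_eq_integral_condExp_mul hm hA hg hg_bound, ← integral_const_mul]
  refine integral_mono_ae ((Integrable.of_bound hg₀ c (.of_forall hg_bound)).const_mul δ)
    (integrable_condExp.mul_bdd hg₀ (.of_forall hg_bound)) ?_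
  filter_upwards [hδ] with ω hω
  exact mul_le_mul_of_nonneg_right hω (hg_nonneg ω)

end

theorem stmt_1_general
    {Ω 𝒲 : Type*} [MeasurableSpace Ω] [MeasurableSpace 𝒲]
    (P : Measure Ω) [IsProbabilityMeasure P]
    (W : Ω → 𝒲) (A Y G₀ Q₀ : Ω → ℝ)
    (hW : Measurable W) (hA : Measurable A) (hY : Measurable Y)
    (hAbin : ∀ ω, A ω = 0 ∨ A ω = 1)
    (hYrange : ∀ ω, Y ω ∈ Set.Icc (0:ℝ) 1)
    (hG₀ : G₀ =ᵐ[P] P[A|MeasurableSpace.comap W inferInstance])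
    (δ : ℝ)
    (hpos : ∀ᵐ ω ∂P, δ ≤ G₀ ω)
    (hQ₀meas : Measurable[MeasurableSpace.comap W inferInstance] Q₀)
    (hQ₀range : ∀ ω, Q₀ ω ∈ Set.Icc (0:ℝ) 1)
    (hQ₀orth : ∀ f : Ω → ℝ, Measurable[MeasurableSpace.comap W inferInstance] f →
      (∃ C : ℝ, ∀ ω, |f ω| ≤ C) →
      ∫ ω, A ω * (Y ω - Q₀ ω) * f ω ∂P = 0)
    (Q : Ω → ℝ)
    (hQmeas : Measurable[MeasurableSpace.comap W inferInstance] Q)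
    (hQrange : ∀ ω, Q ω ∈ Set.Icc (0:ℝ) 1) :
    δ * (∫ ω, (Q ω - Q₀ ω) ^ 2 ∂P)
        ≤ (∫ ω, A ω * (Y ω - Q ω) ^ 2 ∂P) - (∫ ω, A ω * (Y ω - Q₀ ω) ^ 2 ∂P) ∧
      (∫ ω, A ω * (Y ω - Q ω) ^ 2 ∂P) - (∫ ω, A ω * (Y ω - Q₀ ω) ^ 2 ∂P)
        ≤ ∫ ω, (Q ω - Q₀ ω) ^ 2 ∂P := by
  have hm := hW.comap_le
  have hQ : Measurable Q := hQmeas.mono hm le_rfl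
  have hQ₀ : Measurable Q₀ := hQ₀meas.mono hm le_rfl
  have hA01 ω : A ω ∈ Set.Icc (0:ℝ) 1 := by rcases hAbin ω with h | h <;> simp [h]
  have hunit {x y : ℝ} (hx : x ∈ Set.Icc (0:ℝ) 1) (hy : y ∈ Set.Icc (0:ℝ) 1) :
      |x - y| ≤ 1 :=
    abs_sub_le_of_nonneg_of_le hx.1 hx.2 hy.1 hy.2
  have hAabs ω : |A ω| ≤ 1 := (abs_of_nonneg (hA01 ω).1).trans_le (hA01 ω).2
  have hYQ₀ ω := hunit (hYrange ω) (hQ₀range ω)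
  have hQQ₀ ω := hunit (hQrange ω) (hQ₀range ω)
  have hQ₀Q ω := hunit (hQ₀range ω) (hQrange ω)
  have hint {f : Ω → ℝ} (hf : Measurable f) (hf1 : ∀ ω, |f ω| ≤ 1) : Integrable f P :=
    .of_bound hf.aestronglyMeasurable 1 (.of_forall hf1)
  have hsq_bound ω : ‖(Q ω - Q₀ ω) ^ 2‖ ≤ 1 := by
    rw [Real.norm_eq_abs, abs_pow]; bound [hQQ₀ ω]
  have hAsq : Integrable (fun ω => A ω * (Q ω - Q₀ ω) ^ 2) P :=
    hint (by fun_prop) fun ω => by rw [abs_mul, abs_pow]; bound [hAabs ω, hQQ₀ ω]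
  have hdecomp := integral_mul_sq_sub_sub_integral_mul_sq_sub
    (hint (by fun_prop) fun ω => by rw [abs_mul, abs_pow]; bound [hAabs ω, hYQ₀ ω]) hAsq
    (hint (by fun_prop) fun ω => by rw [abs_mul, abs_mul]; bound [hAabs ω, hYQ₀ ω, hQ₀Q ω])
    (hQ₀orth _ (hQ₀meas.sub hQmeas) ⟨1, hQ₀Q⟩)
  rw [hdecomp]
  refine ⟨mul_integral_le_integral_mul_of_le_condExp hm (hint hA hAabs)
    ((hQmeas.sub hQ₀meas).pow_const 2).stronglyMeasurable (fun ω => sq_nonneg _) hsq_bound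
    (by filter_upwards [hG₀, hpos] with ω h₁ h₂ using h₁ ▸ h₂), ?_⟩
  exact integral_mono hAsq (hint (by fun_prop) fun ω => hsq_bound ω)
    fun ω => mul_le_of_le_one_left (sq_nonneg _) (hA01 ω).2

/-- Under the positivity assumption `G₀ ≥ δ` a.s., the loss-based dissimilarity for the
treatment-specific-mean loss is equivalent (up to the constants `δ` and `1`) to the squared
`L²(P)`-distance between `Q` and `Q₀`. -/
theorem stmt_1
    {Ω 𝒲 : Type*} [MeasurableSpace Ω] [MeasurableSpace 𝒲]
    (P : Measure Ω) [IsProbabilityMeasure P]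
    (W : Ω → 𝒲) (A Y G₀ Q₀ : Ω → ℝ)
    (hW : Measurable W) (hA : Measurable A) (hY : Measurable Y)
    (hAbin : ∀ ω, A ω = 0 ∨ A ω = 1)
    (hYrange : ∀ ω, Y ω ∈ Set.Icc (0:ℝ) 1)
    (hG₀ : G₀ =ᵐ[P] P[A|MeasurableSpace.comap W inferInstance])
    (δ : ℝ) (hδ : δ ∈ Set.Ioo (0:ℝ) 1)
    (hpos : ∀ᵐ ω ∂P, δ ≤ G₀ ω)
    (hQ₀meas : Measurable[MeasurableSpace.comap W inferInstance] Q₀)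
    (hQ₀range : ∀ ω, Q₀ ω ∈ Set.Icc (0:ℝ) 1)
    (hQ₀orth : ∀ f : Ω → ℝ, Measurable[MeasurableSpace.comap W inferInstance] f →
      (∃ C : ℝ, ∀ ω, |f ω| ≤ C) →
      ∫ ω, A ω * (Y ω - Q₀ ω) * f ω ∂P = 0)
    (Q : Ω → ℝ)
    (hQmeas : Measurable[MeasurableSpace.comap W inferInstance] Q)
    (hQrange : ∀ ω, Q ω ∈ Set.Icc (0:ℝ) 1) :
    δ * (∫ ω, (Q ω - Q₀ ω) ^ 2 ∂P)
        ≤ (∫ ω, A ω * (Y ω - Q ω) ^ 2 ∂P) - (∫ ω, A ω * (Y ω - Q₀ ω) ^ 2 ∂P) ∧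
      (∫ ω, A ω * (Y ω - Q ω) ^ 2 ∂P) - (∫ ω, A ω * (Y ω - Q₀ ω) ^ 2 ∂P)
        ≤ ∫ ω, (Q ω - Q₀ ω) ^ 2 ∂P :=
  stmt_1_general P W A Y G₀ Q₀ hW hA hY hAbin hYrange hG₀ δ hpos hQ₀meas hQ₀range hQ₀orth Q hQmeas
    hQrange
end

section
/- For every σ(W)-measurable function Q : Ω → ℝ with values in [0,1], E[(A·(Y − Q)² − A·(Y − Q₀)²)²] ≤ 4·(E[A·(Y − Q)²] − E[A·(Y − Q₀)²]); that is, the second moment of the loss difference is bounded by four times the loss-based dissimilarity (this verifies the paper's claim that the constant M₂ = sup_Q P₀(L(Q) − L(Q₀))²/d₀(Q,Q₀) is finite for the bounded treatment-specific-mean loss L(Q)(O) = A(Y − Q(W))²). -/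
open MeasureTheory

/-- The second moment of the loss difference is bounded by four times the loss-based
dissimilarity for the bounded treatment-specific-mean loss `L(Q)(O) = A(Y − Q(W))²`
(finiteness of the paper's constant `M₂`). -/
theorem stmt_2
    {Ω 𝒲 : Type*} [MeasurableSpace Ω] [MeasurableSpace 𝒲]
    (P : Measure Ω) [IsProbabilityMeasure P]
    (W : Ω → 𝒲) (A Y G₀ Q₀ : Ω → ℝ)
    (hW : Measurable W) (hA : Measurable A) (hY : Measurable Y)
    (hAbin : ∀ ω, A ω = 0 ∨ A ω = 1)
    (hYrange : ∀ ω, Y ω ∈ Set.Icc (0:ℝ) 1)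
    (hG₀ : G₀ =ᵐ[P] P[A|MeasurableSpace.comap W inferInstance])
    (hQ₀meas : Measurable[MeasurableSpace.comap W inferInstance] Q₀)
    (hQ₀range : ∀ ω, Q₀ ω ∈ Set.Icc (0:ℝ) 1)
    (hQ₀orth : ∀ f : Ω → ℝ, Measurable[MeasurableSpace.comap W inferInstance] f →
      (∃ C : ℝ, ∀ ω, |f ω| ≤ C) →
      ∫ ω, A ω * (Y ω - Q₀ ω) * f ω ∂P = 0)
    (Q : Ω → ℝ)
    (hQmeas : Measurable[MeasurableSpace.comap W inferInstance] Q)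
    (hQrange : ∀ ω, Q ω ∈ Set.Icc (0:ℝ) 1) :
    (∫ ω, (A ω * (Y ω - Q ω) ^ 2 - A ω * (Y ω - Q₀ ω) ^ 2) ^ 2 ∂P)
      ≤ 4 * ((∫ ω, A ω * (Y ω - Q ω) ^ 2 ∂P) - (∫ ω, A ω * (Y ω - Q₀ ω) ^ 2 ∂P)) := by

  classical
  -- basic measurability
  have hQm : Measurable Q := hQmeas.mono hW.comap_le le_rfl
  have hQ₀m : Measurable Q₀ := hQ₀meas.mono hW.comap_le le_rfl
  -- bounds on A
  have hA0 : ∀ ω, 0 ≤ A ω := fun ω => by rcases hAbin ω with h | h <;> simp [h]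
  have hA1 : ∀ ω, A ω ≤ 1 := fun ω => by rcases hAbin ω with h | h <;> simp [h]
  have hAA : ∀ ω, A ω * A ω = A ω := fun ω => by rcases hAbin ω with h | h <;> simp [h]
  -- integrability helper
  have intb : ∀ (f : Ω → ℝ), Measurable f → ∀ C : ℝ, (∀ ω, |f ω| ≤ C) → Integrable f P :=
    fun f hf C hC => ⟨hf.aestronglyMeasurable,
      HasFiniteIntegral.of_bounded (C := C) (ae_of_all _ fun ω => by simpa using hC ω)⟩
  -- bounds on the relevant functions
  have habs : ∀ ω, |A ω * (Y ω - Q ω) ^ 2| ≤ 1 := by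
    intro ω
    have h1 : |Y ω - Q ω| ≤ 1 := by
      rcases hYrange ω with ⟨h1, h2⟩; rcases hQrange ω with ⟨h3, h4⟩
      rw [abs_le]; constructor <;> linarith
    have : (Y ω - Q ω) ^ 2 ≤ 1 := by
      have := sq_abs (Y ω - Q ω)
      nlinarith [abs_nonneg (Y ω - Q ω)]
    rw [abs_mul, abs_of_nonneg (hA0 ω), abs_of_nonneg (sq_nonneg _)]
    nlinarith [hA0 ω, hA1 ω, sq_nonneg (Y ω - Q ω)]
  have habs₀ : ∀ ω, |A ω * (Y ω - Q₀ ω) ^ 2| ≤ 1 := by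
    intro ω
    have h1 : |Y ω - Q₀ ω| ≤ 1 := by
      rcases hYrange ω with ⟨h1, h2⟩; rcases hQ₀range ω with ⟨h3, h4⟩
      rw [abs_le]; constructor <;> linarith
    have : (Y ω - Q₀ ω) ^ 2 ≤ 1 := by
      have := sq_abs (Y ω - Q₀ ω)
      nlinarith [abs_nonneg (Y ω - Q₀ ω)]
    rw [abs_mul, abs_of_nonneg (hA0 ω), abs_of_nonneg (sq_nonneg _)]
    nlinarith [hA0 ω, hA1 ω, sq_nonneg (Y ω - Q₀ ω)]
  have hQQ : ∀ ω, |Q₀ ω - Q ω| ≤ 1 := by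
    intro ω
    rcases hQrange ω with ⟨h1, h2⟩; rcases hQ₀range ω with ⟨h3, h4⟩
    rw [abs_le]; constructor <;> linarith
  -- integrable components
  have hmeasY : Measurable (fun ω => A ω * (Y ω - Q ω) ^ 2) :=
    hA.mul ((hY.sub hQm).pow_const 2)
  have hmeasY₀ : Measurable (fun ω => A ω * (Y ω - Q₀ ω) ^ 2) :=
    hA.mul ((hY.sub hQ₀m).pow_const 2)
  have int1 : Integrable (fun ω => A ω * (Y ω - Q ω) ^ 2) P := intb _ hmeasY 1 habs
  have int2 : Integrable (fun ω => A ω * (Y ω - Q₀ ω) ^ 2) P := intb _ hmeasY₀ 1 habs₀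
  have hmeasD : Measurable (fun ω => A ω * (Q₀ ω - Q ω) ^ 2) :=
    hA.mul ((hQ₀m.sub hQm).pow_const 2)
  have habsD : ∀ ω, |A ω * (Q₀ ω - Q ω) ^ 2| ≤ 1 := by
    intro ω
    rw [abs_mul, abs_of_nonneg (hA0 ω), abs_of_nonneg (sq_nonneg _)]
    have := hQQ ω
    nlinarith [hA0 ω, hA1 ω, sq_nonneg (Q₀ ω - Q ω), abs_nonneg (Q₀ ω - Q ω), sq_abs (Q₀ ω - Q ω)]
  have intD : Integrable (fun ω => A ω * (Q₀ ω - Q ω) ^ 2) P := intb _ hmeasD 1 habsD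
  have intC : Integrable (fun ω => A ω * (Y ω - Q₀ ω) * (2 * (Q₀ ω - Q ω))) P := by
    refine intb _ ((hA.mul (hY.sub hQ₀m)).mul ((hQ₀m.sub hQm).const_mul 2)) 2 ?_
    intro ω
    rcases hYrange ω with ⟨h1, h2⟩; rcases hQ₀range ω with ⟨h3, h4⟩
    have h5 := hQQ ω
    rw [abs_mul, abs_mul, abs_mul, abs_of_nonneg (hA0 ω)]
    have hy : |Y ω - Q₀ ω| ≤ 1 := by rw [abs_le]; constructor <;> linarith
    have h2' : |(2:ℝ)| = 2 := by norm_num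
    rw [h2']
    have ha1 : A ω * |Y ω - Q₀ ω| ≤ 1 := by
      nlinarith [hA0 ω, hA1 ω, abs_nonneg (Y ω - Q₀ ω)]
    have ha2 : 2 * |Q₀ ω - Q ω| ≤ 2 := by linarith
    calc A ω * |Y ω - Q₀ ω| * (2 * |Q₀ ω - Q ω|) ≤ 1 * 2 :=
          mul_le_mul ha1 ha2 (by positivity) one_pos.le
      _ = 2 := by norm_num
  -- orthogonality
  have orth : ∫ ω, A ω * (Y ω - Q₀ ω) * (2 * (Q₀ ω - Q ω)) ∂P = 0 := by
    refine hQ₀orth _ ((hQ₀meas.sub hQmeas).const_mul 2) ⟨2, fun ω => ?_⟩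
    rw [abs_mul]
    have h2' : |(2:ℝ)| = 2 := by norm_num
    rw [h2']
    nlinarith [hQQ ω, abs_nonneg (Q₀ ω - Q ω)]
  -- difference of integrals equals ∫ A (Q₀ - Q)²
  have hdiff : (∫ ω, A ω * (Y ω - Q ω) ^ 2 ∂P) - (∫ ω, A ω * (Y ω - Q₀ ω) ^ 2 ∂P)
      = ∫ ω, A ω * (Q₀ ω - Q ω) ^ 2 ∂P := by
    rw [← integral_sub int1 int2]
    have : (fun ω => A ω * (Y ω - Q ω) ^ 2 - A ω * (Y ω - Q₀ ω) ^ 2)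
        = fun ω => A ω * (Q₀ ω - Q ω) ^ 2 + A ω * (Y ω - Q₀ ω) * (2 * (Q₀ ω - Q ω)) := by
      funext ω; ring
    rw [this, integral_add intD intC, orth, add_zero]
  rw [hdiff]
  -- pointwise bound on the squared difference
  have hpt : ∀ ω, (A ω * (Y ω - Q ω) ^ 2 - A ω * (Y ω - Q₀ ω) ^ 2) ^ 2
      ≤ 4 * (A ω * (Q₀ ω - Q ω) ^ 2) := by
    intro ω
    have hid : (A ω * (Y ω - Q ω) ^ 2 - A ω * (Y ω - Q₀ ω) ^ 2) ^ 2
        = A ω * ((Q₀ ω - Q ω) ^ 2 * (2 * Y ω - Q ω - Q₀ ω) ^ 2) := by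
      calc (A ω * (Y ω - Q ω) ^ 2 - A ω * (Y ω - Q₀ ω) ^ 2) ^ 2
          = A ω * A ω * ((Q₀ ω - Q ω) ^ 2 * (2 * Y ω - Q ω - Q₀ ω) ^ 2) := by ring
        _ = A ω * ((Q₀ ω - Q ω) ^ 2 * (2 * Y ω - Q ω - Q₀ ω) ^ 2) := by rw [hAA ω]
    rw [hid]
    have hb : (2 * Y ω - Q ω - Q₀ ω) ^ 2 ≤ 4 := by
      rcases hYrange ω with ⟨h1, h2⟩; rcases hQrange ω with ⟨h3, h4⟩
      rcases hQ₀range ω with ⟨h5, h6⟩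
      nlinarith
    have hs : 0 ≤ A ω * (Q₀ ω - Q ω) ^ 2 := mul_nonneg (hA0 ω) (sq_nonneg _)
    calc A ω * ((Q₀ ω - Q ω) ^ 2 * (2 * Y ω - Q ω - Q₀ ω) ^ 2)
        = A ω * (Q₀ ω - Q ω) ^ 2 * (2 * Y ω - Q ω - Q₀ ω) ^ 2 := by ring
      _ ≤ A ω * (Q₀ ω - Q ω) ^ 2 * 4 := mul_le_mul_of_nonneg_left hb hs
      _ = 4 * (A ω * (Q₀ ω - Q ω) ^ 2) := by ring
  -- integrable squared difference
  have intLHS : Integrable (fun ω => (A ω * (Y ω - Q ω) ^ 2 - A ω * (Y ω - Q₀ ω) ^ 2) ^ 2) P := by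
    refine intb _ ((hmeasY.sub hmeasY₀).pow_const 2) 4 ?_
    intro ω
    rw [abs_of_nonneg (sq_nonneg _)]
    calc (A ω * (Y ω - Q ω) ^ 2 - A ω * (Y ω - Q₀ ω) ^ 2) ^ 2
        ≤ 4 * (A ω * (Q₀ ω - Q ω) ^ 2) := hpt ω
      _ ≤ 4 := by
          have := habsD ω
          rw [abs_of_nonneg (mul_nonneg (hA0 ω) (sq_nonneg _))] at this
          linarith
  calc (∫ ω, (A ω * (Y ω - Q ω) ^ 2 - A ω * (Y ω - Q₀ ω) ^ 2) ^ 2 ∂P)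
      ≤ ∫ ω, 4 * (A ω * (Q₀ ω - Q ω) ^ 2) ∂P :=
        integral_mono intLHS (intD.const_mul 4) hpt
    _ = 4 * ∫ ω, A ω * (Q₀ ω - Q ω) ^ 2 ∂P := integral_const_mul 4 _
end

section
/- Exact second-order remainder identity for the treatment-specific mean: for every σ(W)-measurable Q : Ω → ℝ with values in [0,1] and every σ(W)-measurable G : Ω → ℝ with δ ≤ G ≤ 1 P-a.s., one has Ψ(Q) − Ψ(Q₀) + E[(A/G)·(Y − Q)] = E[((G − G₀)/G)·(Q − Q₀)] (the paper's formula R₂₀(Q,G,Q₀,G₀) = P₀ (G − G₀)/G (Q − Q₀) for the remainder implied by the canonical gradient D*(Q,G)(O) = (A/G(W))(Y − Q(W))). -/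
/-!
Split `(A/G)(Y - Q) = A(Y - Q₀)/G + A(Q₀ - Q)/G`. The first term has mean zero by the
orthogonality defining `Q₀`, tested against the bounded σ(W)-measurable `1/G`; in the second,
the bounded σ(W)-measurable factor `(Q₀ - Q)/G` pulls out of `E[· | σ(W)]`, turning `A` into
`G₀`. Finally `(Q - Q₀) + G₀(Q₀ - Q)/G = ((G - G₀)/G)(Q - Q₀)`. Since `G ≥ δ` holds only almost
surely, the argument is run for `max δ G`, which agrees with `G` almost surely.
-/

open MeasureTheory

section

variable {Ω : Type*} {m mΩ : MeasurableSpace Ω} {P : Measure Ω}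

lemma abs_sub_le_one {x y : ℝ} (hx : x ∈ Set.Icc (0:ℝ) 1) (hy : y ∈ Set.Icc (0:ℝ) 1) :
    |x - y| ≤ 1 :=
  abs_sub_le_of_nonneg_of_le hx.1 hx.2 hy.1 hy.2

lemma abs_div_le_inv_of_le {x g δ : ℝ} (hx : |x| ≤ 1) (hδ : 0 < δ) (hg : δ ≤ g) :
    |x / g| ≤ δ⁻¹ := by
  rw [abs_div, abs_of_pos (hδ.trans_le hg), ← one_div]
  exact div_le_div₀ zero_le_one hx hδ hg

lemma integrable_of_forall_mem_Icc [IsFiniteMeasure P] {f : Ω → ℝ}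
    (hf : AEStronglyMeasurable f P) (h : ∀ ω, f ω ∈ Set.Icc (0:ℝ) 1) : Integrable f P :=
  .of_bound hf 1 (.of_forall fun ω => by
    rw [Real.norm_eq_abs, abs_of_nonneg (h ω).1]
    exact (h ω).2)

lemma integral_mul_eq_integral_mul_condExp [IsFiniteMeasure P] (hm : m ≤ mΩ) {f g : Ω → ℝ}
    (hf : StronglyMeasurable[m] f) {c : ℝ} (hf_bound : ∀ ω, |f ω| ≤ c) (hg : Integrable g P) :
    ∫ ω, f ω * g ω ∂P = ∫ ω, f ω * P[g|m] ω ∂P := by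
  rw [← integral_condExp hm]
  exact integral_congr_ae
    (condExp_stronglyMeasurable_mul_of_bound hm hf hg c (.of_forall hf_bound))

theorem integral_ipw_eq_integral_mul_propensity [IsFiniteMeasure P] (hm : m ≤ mΩ)
    {A Y G₀ Q₀ Q G : Ω → ℝ} (hA : Measurable A) (hY : Measurable Y)
    (hAbin : ∀ ω, A ω = 0 ∨ A ω = 1) (hYrange : ∀ ω, Y ω ∈ Set.Icc (0:ℝ) 1)
    (hG₀ : G₀ =ᵐ[P] P[A|m]) (hQ₀meas : Measurable[m] Q₀) (hQ₀range : ∀ ω, Q₀ ω ∈ Set.Icc (0:ℝ) 1)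
    (hQ₀orth : ∀ f : Ω → ℝ, Measurable[m] f → (∃ C : ℝ, ∀ ω, |f ω| ≤ C) →
      ∫ ω, A ω * (Y ω - Q₀ ω) * f ω ∂P = 0)
    (hQmeas : Measurable[m] Q) (hQrange : ∀ ω, Q ω ∈ Set.Icc (0:ℝ) 1)
    {δ : ℝ} (hδ : 0 < δ) (hGmeas : Measurable[m] G) (hG : ∀ ω, δ ≤ G ω) :
    ∫ ω, (A ω / G ω) * (Y ω - Q ω) ∂P = ∫ ω, (Q₀ ω - Q ω) / G ω * G₀ ω ∂P := by
  have hA_bdd : ∀ ω, |A ω| ≤ 1 := fun ω => by rcases hAbin ω with h | h <;> simp [h]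
  have hA_int : Integrable A P := .of_bound hA.aestronglyMeasurable 1 (.of_forall hA_bdd)
  have hresid_int : Integrable (fun ω => A ω * (Y ω - Q₀ ω)) P :=
    .of_bound (hA.mul (hY.sub (hQ₀meas.mono hm le_rfl))).aestronglyMeasurable 1
      (.of_forall fun ω => by
        rw [Real.norm_eq_abs, abs_mul]
        exact mul_le_one₀ (hA_bdd ω) (abs_nonneg _) (abs_sub_le_one (hYrange ω) (hQ₀range ω)))
  have hinv_bdd : ∀ ω, |1 / G ω| ≤ δ⁻¹ := fun ω => abs_div_le_inv_of_le (by simp) hδ (hG ω)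
  have hweight_meas : Measurable[m] fun ω => (Q₀ ω - Q ω) / G ω :=
    (hQ₀meas.sub hQmeas).div hGmeas
  have hweight_bdd : ∀ ω, |(Q₀ ω - Q ω) / G ω| ≤ δ⁻¹ := fun ω =>
    abs_div_le_inv_of_le (abs_sub_le_one (hQ₀range ω) (hQrange ω)) hδ (hG ω)
  have horth : ∫ ω, A ω * (Y ω - Q₀ ω) * (1 / G ω) ∂P = 0 :=
    hQ₀orth _ (measurable_const.div hGmeas) ⟨δ⁻¹, hinv_bdd⟩
  have hpull : ∫ ω, (Q₀ ω - Q ω) / G ω * A ω ∂P = ∫ ω, (Q₀ ω - Q ω) / G ω * G₀ ω ∂P := by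
    rw [integral_mul_eq_integral_mul_condExp hm hweight_meas.stronglyMeasurable hweight_bdd hA_int]
    exact integral_congr_ae (hG₀.mono fun ω hω => by simp only [hω])
  have hsplit : ∫ ω, (A ω / G ω) * (Y ω - Q ω) ∂P
      = ∫ ω, A ω * (Y ω - Q₀ ω) * (1 / G ω) ∂P + ∫ ω, (Q₀ ω - Q ω) / G ω * A ω ∂P := by
    rw [← integral_add]
    · congr 1 with ω; field_simp [(hδ.trans_le (hG ω)).ne']; ring
    · exact hresid_int.mul_bdd
        (measurable_const.div (hGmeas.mono hm le_rfl)).aestronglyMeasurable (.of_forall hinv_bdd)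
    · exact hA_int.bdd_mul (hweight_meas.mono hm le_rfl).aestronglyMeasurable
        (.of_forall hweight_bdd)
  rw [hsplit, horth, hpull, zero_add]

theorem integral_relative_error_mul_sub [IsFiniteMeasure P] {G₀ Q₀ Q G : Ω → ℝ}
    (hG₀ : Integrable G₀ P) (hQ₀meas : Measurable Q₀) (hQ₀range : ∀ ω, Q₀ ω ∈ Set.Icc (0:ℝ) 1)
    (hQmeas : Measurable Q) (hQrange : ∀ ω, Q ω ∈ Set.Icc (0:ℝ) 1)
    {δ : ℝ} (hδ : 0 < δ) (hGmeas : Measurable G) (hG : ∀ ω, δ ≤ G ω) :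
    ∫ ω, ((G ω - G₀ ω) / G ω) * (Q ω - Q₀ ω) ∂P
      = (∫ ω, Q ω ∂P) - (∫ ω, Q₀ ω ∂P) + ∫ ω, (Q₀ ω - Q ω) / G ω * G₀ ω ∂P := by
  have hQ_int : Integrable Q P := integrable_of_forall_mem_Icc hQmeas.aestronglyMeasurable hQrange
  have hQ₀_int : Integrable Q₀ P :=
    integrable_of_forall_mem_Icc hQ₀meas.aestronglyMeasurable hQ₀range
  have hweight_int : Integrable (fun ω => (Q₀ ω - Q ω) / G ω * G₀ ω) P :=
    hG₀.bdd_mul ((hQ₀meas.sub hQmeas).div hGmeas).aestronglyMeasurable (.of_forall fun ω =>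
      abs_div_le_inv_of_le (abs_sub_le_one (hQ₀range ω) (hQrange ω)) hδ (hG ω))
  rw [← integral_sub hQ_int hQ₀_int,
    ← integral_add (f := fun ω => Q ω - Q₀ ω) (hQ_int.sub hQ₀_int) hweight_int]
  congr 1 with ω
  field_simp [(hδ.trans_le (hG ω)).ne']
  ring

end

theorem stmt_3_general
    {Ω 𝒲 : Type*} [MeasurableSpace Ω] [MeasurableSpace 𝒲]
    (P : Measure Ω) [IsProbabilityMeasure P]
    (W : Ω → 𝒲) (A Y G₀ Q₀ : Ω → ℝ)
    (hW : Measurable W) (hA : Measurable A) (hY : Measurable Y)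
    (hAbin : ∀ ω, A ω = 0 ∨ A ω = 1)
    (hYrange : ∀ ω, Y ω ∈ Set.Icc (0:ℝ) 1)
    (hG₀ : G₀ =ᵐ[P] P[A|MeasurableSpace.comap W inferInstance])
    (δ : ℝ) (hδ : δ ∈ Set.Ioo (0:ℝ) 1)
    (hQ₀meas : Measurable[MeasurableSpace.comap W inferInstance] Q₀)
    (hQ₀range : ∀ ω, Q₀ ω ∈ Set.Icc (0:ℝ) 1)
    (hQ₀orth : ∀ f : Ω → ℝ, Measurable[MeasurableSpace.comap W inferInstance] f →
      (∃ C : ℝ, ∀ ω, |f ω| ≤ C) →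
      ∫ ω, A ω * (Y ω - Q₀ ω) * f ω ∂P = 0)
    (Q G : Ω → ℝ)
    (hQmeas : Measurable[MeasurableSpace.comap W inferInstance] Q)
    (hQrange : ∀ ω, Q ω ∈ Set.Icc (0:ℝ) 1)
    (hGmeas : Measurable[MeasurableSpace.comap W inferInstance] G)
    (hGrange : ∀ᵐ ω ∂P, δ ≤ G ω ∧ G ω ≤ 1) :
    (∫ ω, Q ω ∂P) - (∫ ω, Q₀ ω ∂P) + (∫ ω, (A ω / G ω) * (Y ω - Q ω) ∂P)
      = ∫ ω, ((G ω - G₀ ω) / G ω) * (Q ω - Q₀ ω) ∂P := by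
  have hG_clamp : ∀ᵐ ω ∂P, G ω = max δ (G ω) :=
    hGrange.mono fun ω hω => (max_eq_right hω.1).symm
  have hlhs : ∫ ω, (A ω / G ω) * (Y ω - Q ω) ∂P
      = ∫ ω, (A ω / max δ (G ω)) * (Y ω - Q ω) ∂P :=
    integral_congr_ae (hG_clamp.mono fun ω hω => by simp only [← hω])
  have hrhs : ∫ ω, ((G ω - G₀ ω) / G ω) * (Q ω - Q₀ ω) ∂P
      = ∫ ω, ((max δ (G ω) - G₀ ω) / max δ (G ω)) * (Q ω - Q₀ ω) ∂P :=
    integral_congr_ae (hG_clamp.mono fun ω hω => by simp only [← hω])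
  have hm := hW.comap_le
  have hG'meas : Measurable[MeasurableSpace.comap W inferInstance] fun ω => max δ (G ω) :=
    measurable_const.max hGmeas
  have hG'_ge : ∀ ω, δ ≤ max δ (G ω) := fun ω => le_max_left δ (G ω)
  rw [hlhs, hrhs, integral_ipw_eq_integral_mul_propensity hm hA hY hAbin hYrange hG₀ hQ₀meas
      hQ₀range hQ₀orth hQmeas hQrange hδ.1 hG'meas hG'_ge,
    integral_relative_error_mul_sub (integrable_condExp.congr hG₀.symm) (hQ₀meas.mono hm le_rfl)
      hQ₀range (hQmeas.mono hm le_rfl) hQrange hδ.1 (hG'meas.mono hm le_rfl) hG'_ge]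

/-- Exact second-order remainder identity for the treatment-specific mean:
`Ψ(Q) − Ψ(Q₀) + P₀ D*(Q,G) = P₀ ((G − G₀)/G)(Q − Q₀)` where
`D*(Q,G)(O) = (A/G(W))(Y − Q(W))` and `Ψ(Q) = E[Q]`. -/
theorem stmt_3
    {Ω 𝒲 : Type*} [MeasurableSpace Ω] [MeasurableSpace 𝒲]
    (P : Measure Ω) [IsProbabilityMeasure P]
    (W : Ω → 𝒲) (A Y G₀ Q₀ : Ω → ℝ)
    (hW : Measurable W) (hA : Measurable A) (hY : Measurable Y)
    (hAbin : ∀ ω, A ω = 0 ∨ A ω = 1)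
    (hYrange : ∀ ω, Y ω ∈ Set.Icc (0:ℝ) 1)
    (hG₀ : G₀ =ᵐ[P] P[A|MeasurableSpace.comap W inferInstance])
    (δ : ℝ) (hδ : δ ∈ Set.Ioo (0:ℝ) 1)
    (hpos : ∀ᵐ ω ∂P, δ ≤ G₀ ω)
    (hQ₀meas : Measurable[MeasurableSpace.comap W inferInstance] Q₀)
    (hQ₀range : ∀ ω, Q₀ ω ∈ Set.Icc (0:ℝ) 1)
    (hQ₀orth : ∀ f : Ω → ℝ, Measurable[MeasurableSpace.comap W inferInstance] f →
      (∃ C : ℝ, ∀ ω, |f ω| ≤ C) →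
      ∫ ω, A ω * (Y ω - Q₀ ω) * f ω ∂P = 0)
    (Q G : Ω → ℝ)
    (hQmeas : Measurable[MeasurableSpace.comap W inferInstance] Q)
    (hQrange : ∀ ω, Q ω ∈ Set.Icc (0:ℝ) 1)
    (hGmeas : Measurable[MeasurableSpace.comap W inferInstance] G)
    (hGrange : ∀ᵐ ω ∂P, δ ≤ G ω ∧ G ω ≤ 1) :
    (∫ ω, Q ω ∂P) - (∫ ω, Q₀ ω ∂P) + (∫ ω, (A ω / G ω) * (Y ω - Q ω) ∂P)
      = ∫ ω, ((G ω - G₀ ω) / G ω) * (Q ω - Q₀ ω) ∂P :=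
  stmt_3_general P W A Y G₀ Q₀ hW hA hY hAbin hYrange hG₀ δ hδ hQ₀meas hQ₀range hQ₀orth Q G hQmeas
    hQrange hGmeas hGrange
end

section
/- Oracle-bias identity and bound: assume G₀ ≥ δ P-a.s. and G_T ≥ δ P-a.s. Then Ψ(Q_T) − Ψ(Q₀) = E[((G₀ − G_T)/G_T)·(Q₀ − Q_T)], and consequently |Ψ(Q_T) − Ψ(Q₀)| ≤ δ⁻¹·‖G_T − G₀‖_{L²(P)}·‖Q_T − Q₀‖_{L²(P)}; the bias of the oracle-ensemble plug-in is a second-order product of the differences between the reduced and true nuisance/outcome functions. -/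
open MeasureTheory

private lemma bdd_integrable {Ω : Type*} [MeasurableSpace Ω] {P : Measure Ω}
    [IsFiniteMeasure P] {f : Ω → ℝ} {C : ℝ} (hf : Measurable f) (hC : ∀ ω, |f ω| ≤ C) :
    Integrable f P :=
  ⟨hf.aestronglyMeasurable,
    HasFiniteIntegral.of_bounded (C := C) (Filter.Eventually.of_forall fun ω => by
      simpa [Real.norm_eq_abs] using hC ω)⟩

/-- Cauchy–Schwarz for integrals. -/
private lemma integral_mul_le_sqrt {Ω : Type*} [MeasurableSpace Ω] {P : Measure Ω}
    {u v : Ω → ℝ}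
    (hu2 : Integrable (fun ω => u ω ^ 2) P) (hv2 : Integrable (fun ω => v ω ^ 2) P)
    (huv : Integrable (fun ω => u ω * v ω) P) :
    ∫ ω, u ω * v ω ∂P ≤ Real.sqrt (∫ ω, u ω ^ 2 ∂P) * Real.sqrt (∫ ω, v ω ^ 2 ∂P) := by
  set a := ∫ ω, u ω ^ 2 ∂P with ha
  set c := ∫ ω, v ω ^ 2 ∂P with hc
  set b := ∫ ω, u ω * v ω ∂P with hb
  have ha0 : 0 ≤ a := integral_nonneg fun ω => sq_nonneg _
  have hc0 : 0 ≤ c := integral_nonneg fun ω => sq_nonneg _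
  have key : ∀ t : ℝ, 0 ≤ a * (t * t) + (-2 * b) * t + c := by
    intro t
    have h0 : 0 ≤ ∫ ω, (t * u ω - v ω) ^ 2 ∂P := integral_nonneg fun ω => sq_nonneg _
    have hexp : ∀ ω, (t * u ω - v ω) ^ 2
        = (t * t) * u ω ^ 2 + (-2 * t) * (u ω * v ω) + v ω ^ 2 := by
      intro ω; ring
    have hI : ∫ ω, (t * t * u ω ^ 2 + -2 * t * (u ω * v ω) + v ω ^ 2) ∂P
        = t * t * a + -2 * t * b + c := by
      have hi1 : Integrable (fun ω => t * t * u ω ^ 2) P := hu2.const_mul (t*t)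
      have hi2 : Integrable (fun ω => -2 * t * (u ω * v ω)) P := huv.const_mul (-2*t)
      have hi12 : Integrable (fun ω => t * t * u ω ^ 2 + -2 * t * (u ω * v ω)) P := hi1.add hi2
      rw [integral_add hi12 hv2, integral_add hi1 hi2, integral_const_mul, integral_const_mul]
    simp_rw [hexp] at h0
    rw [hI] at h0
    nlinarith [h0]
  have hdisc : discrim a (-2 * b) c ≤ 0 := discrim_le_zero key
  have hb2 : b ^ 2 ≤ a * c := by
    rw [discrim] at hdisc; nlinarith
  calc b ≤ |b| := le_abs_self b
    _ = Real.sqrt (b ^ 2) := (Real.sqrt_sq_eq_abs b).symm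
    _ ≤ Real.sqrt (a * c) := Real.sqrt_le_sqrt hb2
    _ = Real.sqrt a * Real.sqrt c := Real.sqrt_mul ha0 c

/-- Oracle-bias identity and bound: `Ψ(Q_T) − Ψ(Q₀) = E[((G₀ − G_T)/G_T)(Q₀ − Q_T)]`
and consequently `|Ψ(Q_T) − Ψ(Q₀)| ≤ δ⁻¹ ‖G_T − G₀‖_{L²(P)} ‖Q_T − Q₀‖_{L²(P)}`. -/
theorem stmt_9
    {Ω 𝒲 : Type*} [MeasurableSpace Ω] [MeasurableSpace 𝒲]
    (P : Measure Ω) [IsProbabilityMeasure P]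
    (W : Ω → 𝒲) (A Y G₀ Q₀ : Ω → ℝ)
    (hW : Measurable W) (hA : Measurable A) (hY : Measurable Y)
    (hAbin : ∀ ω, A ω = 0 ∨ A ω = 1)
    (hYrange : ∀ ω, Y ω ∈ Set.Icc (0:ℝ) 1)
    (hG₀ : G₀ =ᵐ[P] P[A|MeasurableSpace.comap W inferInstance])
    (δ : ℝ) (hδ : δ ∈ Set.Ioo (0:ℝ) 1)
    (hpos : ∀ᵐ ω ∂P, δ ≤ G₀ ω)
    (hQ₀meas : Measurable[MeasurableSpace.comap W inferInstance] Q₀)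
    (hQ₀range : ∀ ω, Q₀ ω ∈ Set.Icc (0:ℝ) 1)
    (hQ₀orth : ∀ f : Ω → ℝ, Measurable[MeasurableSpace.comap W inferInstance] f →
      (∃ C : ℝ, ∀ ω, |f ω| ≤ C) →
      ∫ ω, A ω * (Y ω - Q₀ ω) * f ω ∂P = 0)
    {J : ℕ} (T : 𝒲 → (Fin J → ℝ)) (hT : Measurable T)
    (QT : Ω → ℝ)
    (hQTmeas : Measurable[MeasurableSpace.comap (fun ω => T (W ω)) inferInstance] QT)
    (hQTrange : ∀ ω, QT ω ∈ Set.Icc (0:ℝ) 1)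
    (hQTorth : ∀ f : Ω → ℝ,
      Measurable[MeasurableSpace.comap (fun ω => T (W ω)) inferInstance] f →
      (∃ C : ℝ, ∀ ω, |f ω| ≤ C) →
      ∫ ω, A ω * (Y ω - QT ω) * f ω ∂P = 0)
    (GT : Ω → ℝ)
    (hGT : GT =ᵐ[P] P[A|MeasurableSpace.comap (fun ω => T (W ω)) inferInstance])
    (hGTpos : ∀ᵐ ω ∂P, δ ≤ GT ω) :
    (∫ ω, QT ω ∂P) - (∫ ω, Q₀ ω ∂P)
        = ∫ ω, ((G₀ ω - GT ω) / GT ω) * (Q₀ ω - QT ω) ∂P ∧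
      |(∫ ω, QT ω ∂P) - (∫ ω, Q₀ ω ∂P)|
        ≤ δ⁻¹ * Real.sqrt (∫ ω, (GT ω - G₀ ω) ^ 2 ∂P)
            * Real.sqrt (∫ ω, (QT ω - Q₀ ω) ^ 2 ∂P) := by
  obtain ⟨hδ0, hδ1⟩ := hδ
  have hmW : MeasurableSpace.comap W inferInstance ≤ ‹MeasurableSpace Ω› := hW.comap_le
  have hmTW : MeasurableSpace.comap (fun ω => T (W ω)) inferInstance
      ≤ MeasurableSpace.comap W inferInstance := by
    rw [show (fun ω => T (W ω)) = T ∘ W from rfl, ← MeasurableSpace.comap_comp]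
    exact MeasurableSpace.comap_mono hT.comap_le
  have hmT : MeasurableSpace.comap (fun ω => T (W ω)) inferInstance
      ≤ ‹MeasurableSpace Ω› := hmTW.trans hmW
  -- integrability of A
  have hAint : Integrable A P := bdd_integrable hA (C := 1) fun ω => by
    rcases hAbin ω with h | h <;> simp [h]
  -- conditional expectations
  set cT : Ω → ℝ := P[A|MeasurableSpace.comap (fun ω => T (W ω)) inferInstance] with hcT
  set cW : Ω → ℝ := P[A|MeasurableSpace.comap W inferInstance] with hcW
  have hcTm : Measurable[MeasurableSpace.comap (fun ω => T (W ω)) inferInstance] cT :=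
    stronglyMeasurable_condExp.measurable
  have hcWm : Measurable[MeasurableSpace.comap W inferInstance] cW :=
    stronglyMeasurable_condExp.measurable
  have hA1 : A ≤ᵐ[P] (fun _ => (1:ℝ)) := Filter.Eventually.of_forall fun ω => by
    rcases hAbin ω with h | h <;> simp [h]
  have hcTle : cT ≤ᵐ[P] (fun _ => (1:ℝ)) := by
    have := condExp_mono (m := MeasurableSpace.comap (fun ω => T (W ω)) inferInstance)
      (μ := P) hAint (integrable_const 1) hA1
    rwa [condExp_const hmT] at this
  have hcWle : cW ≤ᵐ[P] (fun _ => (1:ℝ)) := by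
    have := condExp_mono (m := MeasurableSpace.comap W inferInstance)
      (μ := P) hAint (integrable_const 1) hA1
    rwa [condExp_const hmW] at this
  -- truncated versions
  set g : Ω → ℝ := fun ω => max δ (min 1 (cT ω)) with hg
  set g₀ : Ω → ℝ := fun ω => max δ (min 1 (cW ω)) with hg₀
  have hgm : Measurable[MeasurableSpace.comap (fun ω => T (W ω)) inferInstance] g :=
    measurable_const.max (measurable_const.min hcTm)
  have hg₀m : Measurable[MeasurableSpace.comap W inferInstance] g₀ :=
    measurable_const.max (measurable_const.min hcWm)
  have hgδ : ∀ ω, δ ≤ g ω := fun ω => le_max_left _ _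
  have hg1 : ∀ ω, g ω ≤ 1 := fun ω => max_le hδ1.le (min_le_left _ _)
  have hg₀δ : ∀ ω, δ ≤ g₀ ω := fun ω => le_max_left _ _
  have hg₀1 : ∀ ω, g₀ ω ≤ 1 := fun ω => max_le hδ1.le (min_le_left _ _)
  have hgpos : ∀ ω, 0 < g ω := fun ω => lt_of_lt_of_le hδ0 (hgδ ω)
  have hgae : g =ᵐ[P] GT := by
    filter_upwards [hGT, hGTpos, hcTle] with ω h1 h2 h3
    have hδc : δ ≤ cT ω := h1 ▸ h2
    simp only [hg]
    rw [min_eq_right (by simpa using h3), max_eq_right hδc, ← h1]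
  have hg₀ae : g₀ =ᵐ[P] G₀ := by
    filter_upwards [hG₀, hpos, hcWle] with ω h1 h2 h3
    have hδc : δ ≤ cW ω := h1 ▸ h2
    simp only [hg₀]
    rw [min_eq_right (by simpa using h3), max_eq_right hδc, ← h1]
  -- the bounded mW-measurable multiplier h
  set h : Ω → ℝ := fun ω => (Q₀ ω - QT ω) * (g ω)⁻¹ with hh
  have hQ₀m0 : Measurable Q₀ := hQ₀meas.mono hmW le_rfl
  have hQTm0 : Measurable QT := hQTmeas.mono hmT le_rfl
  have hgm0 : Measurable g := hgm.mono hmT le_rfl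
  have hg₀m0 : Measurable g₀ := hg₀m.mono hmW le_rfl
  have hQd : ∀ ω, |Q₀ ω - QT ω| ≤ 1 := fun ω => by
    have h1 := hQ₀range ω; have h2 := hQTrange ω
    rw [abs_le]; constructor <;> [linarith [h1.1, h2.2]; linarith [h1.2, h2.1]]
  have hginv : ∀ ω, |(g ω)⁻¹| ≤ δ⁻¹ := fun ω => by
    rw [abs_of_pos (inv_pos.2 (hgpos ω))]
    exact inv_anti₀ hδ0 (hgδ ω)
  have hhm : Measurable[MeasurableSpace.comap W inferInstance] h :=
    ((hQ₀meas.sub (hQTmeas.mono hmTW le_rfl)).mul (hgm.mono hmTW le_rfl).inv)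
  have hhbd : ∀ ω, |h ω| ≤ δ⁻¹ := fun ω => by
    rw [hh, abs_mul]
    calc |Q₀ ω - QT ω| * |(g ω)⁻¹| ≤ 1 * δ⁻¹ :=
          mul_le_mul (hQd ω) (hginv ω) (abs_nonneg _) zero_le_one
      _ = δ⁻¹ := one_mul _
  have hhm0 : Measurable h := hhm.mono hmW le_rfl
  have hhint : Integrable h P := bdd_integrable hhm0 hhbd
  -- pull-out: ∫ h * cW = ∫ h * A
  have hhAint : Integrable (h * A) P :=
    bdd_integrable (hhm0.mul hA) (C := δ⁻¹ * 1) fun ω => by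
      rw [Pi.mul_apply, abs_mul]
      exact mul_le_mul (hhbd ω) (by rcases hAbin ω with h' | h' <;> simp [h'])
        (abs_nonneg _) (le_of_lt (inv_pos.2 hδ0))
  have pullout : ∫ ω, h ω * cW ω ∂P = ∫ ω, h ω * A ω ∂P := by
    have hmul := condExp_mul_of_stronglyMeasurable_left (m := MeasurableSpace.comap W inferInstance)
      (μ := P) (hhm.stronglyMeasurable) hhAint hAint
    calc ∫ ω, h ω * cW ω ∂P
        = ∫ ω, (P[h * A|MeasurableSpace.comap W inferInstance]) ω ∂P := by
          refine integral_congr_ae ?_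
          filter_upwards [hmul] with ω hω
          rw [hω]; rfl
      _ = ∫ ω, (h * A) ω ∂P := integral_condExp hmW
      _ = ∫ ω, h ω * A ω ∂P := rfl
  -- ∫ h * A = 0 via orthogonality
  have hginvm : Measurable[MeasurableSpace.comap (fun ω => T (W ω)) inferInstance]
      (fun ω => (g ω)⁻¹) := hgm.inv
  have horthT := hQTorth (fun ω => (g ω)⁻¹) hginvm ⟨δ⁻¹, hginv⟩
  have horthW := hQ₀orth (fun ω => (g ω)⁻¹) (hginvm.mono hmTW le_rfl) ⟨δ⁻¹, hginv⟩
  have hgim0 : Measurable (fun ω => (g ω)⁻¹) := hgm0.inv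
  have hint1 : Integrable (fun ω => A ω * (Y ω - QT ω) * (g ω)⁻¹) P := by
    refine bdd_integrable ((hA.mul (hY.sub hQTm0)).mul hgim0) (C := 1 * 1 * δ⁻¹) fun ω => by
      rw [abs_mul, abs_mul]
      refine mul_le_mul (mul_le_mul ?_ ?_ (abs_nonneg _) zero_le_one) (hginv ω)
        (abs_nonneg _) (by norm_num)
      · rcases hAbin ω with h' | h' <;> simp [h']
      · have h1 := hYrange ω; have h2 := hQTrange ω
        rw [abs_le]; constructor <;> [linarith [h1.1, h2.2]; linarith [h1.2, h2.1]]
  have hint2 : Integrable (fun ω => A ω * (Y ω - Q₀ ω) * (g ω)⁻¹) P := by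
    refine bdd_integrable ((hA.mul (hY.sub hQ₀m0)).mul hgim0) (C := 1 * 1 * δ⁻¹) fun ω => by
      rw [abs_mul, abs_mul]
      refine mul_le_mul (mul_le_mul ?_ ?_ (abs_nonneg _) zero_le_one) (hginv ω)
        (abs_nonneg _) (by norm_num)
      · rcases hAbin ω with h' | h' <;> simp [h']
      · have h1 := hYrange ω; have h2 := hQ₀range ω
        rw [abs_le]; constructor <;> [linarith [h1.1, h2.2]; linarith [h1.2, h2.1]]
  have hhA0 : ∫ ω, h ω * A ω ∂P = 0 := by
    have hsplit : ∀ ω, h ω * A ω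
        = A ω * (Y ω - QT ω) * (g ω)⁻¹ - A ω * (Y ω - Q₀ ω) * (g ω)⁻¹ := fun ω => by
      simp only [hh]; ring
    rw [show (fun ω => h ω * A ω)
        = fun ω => A ω * (Y ω - QT ω) * (g ω)⁻¹ - A ω * (Y ω - Q₀ ω) * (g ω)⁻¹
        from funext hsplit, integral_sub hint1 hint2, horthT, horthW, sub_zero]
  -- K = ∫ g₀ * h = 0
  have hK : ∫ ω, h ω * g₀ ω ∂P = 0 := by
    have : ∫ ω, h ω * g₀ ω ∂P = ∫ ω, h ω * cW ω ∂P := by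
      refine integral_congr_ae ?_
      filter_upwards [hg₀ae, hG₀] with ω h1 h2
      rw [h1, h2]
    rw [this, pullout, hhA0]
  -- integrability facts
  have hQint : Integrable (fun ω => Q₀ ω - QT ω) P :=
    bdd_integrable (hQ₀m0.sub hQTm0) hQd
  have hhg₀int : Integrable (fun ω => h ω * g₀ ω) P :=
    bdd_integrable (hhm0.mul hg₀m0) (C := δ⁻¹ * 1) fun ω => by
      rw [abs_mul]
      refine mul_le_mul (hhbd ω) ?_ (abs_nonneg _) (le_of_lt (inv_pos.2 hδ0))
      rw [abs_le]; exact ⟨by linarith [hg₀δ ω], hg₀1 ω⟩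
  -- the identity with measurable versions
  have hident : ∫ ω, ((G₀ ω - GT ω) / GT ω) * (Q₀ ω - QT ω) ∂P
      = ∫ ω, h ω * g₀ ω ∂P - ∫ ω, (Q₀ ω - QT ω) ∂P := by
    rw [← integral_sub hhg₀int hQint]
    refine integral_congr_ae ?_
    filter_upwards [hgae, hg₀ae] with ω h1 h2
    rw [← h1, ← h2, hh]
    have hne : g ω ≠ 0 := ne_of_gt (hgpos ω)
    field_simp
  have hid : (∫ ω, QT ω ∂P) - (∫ ω, Q₀ ω ∂P)
      = ∫ ω, ((G₀ ω - GT ω) / GT ω) * (Q₀ ω - QT ω) ∂P := by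
    rw [hident, hK, zero_sub, integral_sub (bdd_integrable hQ₀m0 (C := 1) fun ω => by
        have := hQ₀range ω; rw [abs_le]; exact ⟨by linarith [this.1], this.2⟩)
      (bdd_integrable hQTm0 (C := 1) fun ω => by
        have := hQTrange ω; rw [abs_le]; exact ⟨by linarith [this.1], this.2⟩)]
    ring
  refine ⟨hid, ?_⟩
  -- Bound part
  -- rewrite with measurable versions
  have hrw : ∫ ω, ((G₀ ω - GT ω) / GT ω) * (Q₀ ω - QT ω) ∂P
      = ∫ ω, ((g₀ ω - g ω) / g ω) * (Q₀ ω - QT ω) ∂P := by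
    refine integral_congr_ae ?_
    filter_upwards [hgae, hg₀ae] with ω h1 h2
    rw [h1, h2]
  set u : Ω → ℝ := fun ω => |g ω - g₀ ω| with hu
  set v : Ω → ℝ := fun ω => |Q₀ ω - QT ω| with hv
  have hubd : ∀ ω, |u ω| ≤ 1 := fun ω => by
    simp only [hu, abs_abs, abs_le]
    constructor <;> [linarith [hgδ ω, hg₀1 ω, hδ0]; linarith [hg1 ω, hg₀δ ω, hδ0]]
  have hvbd : ∀ ω, |v ω| ≤ 1 := fun ω => by simp only [hv, abs_abs]; exact hQd ω
  have hum : Measurable u := (hgm0.sub hg₀m0).abs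
  have hvm : Measurable v := (hQ₀m0.sub hQTm0).abs
  have hu2 : Integrable (fun ω => u ω ^ 2) P :=
    bdd_integrable (hum.pow_const 2) (C := 1) fun ω => by
      rw [abs_pow]
      calc |u ω| ^ 2 ≤ 1 ^ 2 := pow_le_pow_left₀ (abs_nonneg _) (hubd ω) 2
        _ = 1 := one_pow 2
  have hv2 : Integrable (fun ω => v ω ^ 2) P :=
    bdd_integrable (hvm.pow_const 2) (C := 1) fun ω => by
      rw [abs_pow]
      calc |v ω| ^ 2 ≤ 1 ^ 2 := pow_le_pow_left₀ (abs_nonneg _) (hvbd ω) 2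
        _ = 1 := one_pow 2
  have huv : Integrable (fun ω => u ω * v ω) P :=
    bdd_integrable (hum.mul hvm) (C := 1 * 1) fun ω => by
      rw [abs_mul]
      exact mul_le_mul (hubd ω) (hvbd ω) (abs_nonneg _) zero_le_one
  have hCS := integral_mul_le_sqrt (P := P) hu2 hv2 huv
  -- pointwise bound
  have hψint : Integrable (fun ω => ((g₀ ω - g ω) / g ω) * (Q₀ ω - QT ω)) P := by
    refine bdd_integrable (((hg₀m0.sub hgm0).div hgm0).mul (hQ₀m0.sub hQTm0))
      (C := (1 * δ⁻¹) * 1) fun ω => by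
      rw [abs_mul, div_eq_mul_inv, abs_mul]
      refine mul_le_mul (mul_le_mul ?_ (hginv ω) (abs_nonneg _) zero_le_one) (hQd ω)
        (abs_nonneg _) (by positivity)
      rw [abs_le]
      constructor <;> [linarith [hg₀δ ω, hg1 ω, hδ0]; linarith [hg₀1 ω, hgδ ω, hδ0]]
  have habs : |∫ ω, ((g₀ ω - g ω) / g ω) * (Q₀ ω - QT ω) ∂P|
      ≤ ∫ ω, δ⁻¹ * (u ω * v ω) ∂P := by
    calc |∫ ω, ((g₀ ω - g ω) / g ω) * (Q₀ ω - QT ω) ∂P|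
        ≤ ∫ ω, |((g₀ ω - g ω) / g ω) * (Q₀ ω - QT ω)| ∂P := by
          simpa only [Real.norm_eq_abs] using norm_integral_le_integral_norm
            (μ := P) (fun ω => ((g₀ ω - g ω) / g ω) * (Q₀ ω - QT ω))
      _ ≤ ∫ ω, δ⁻¹ * (u ω * v ω) ∂P := by
          refine integral_mono hψint.abs ((huv.const_mul _)) fun ω => ?_
          simp only [hu, hv]
          rw [abs_mul, div_eq_mul_inv, abs_mul]
          have h1 : |g₀ ω - g ω| * |(g ω)⁻¹| ≤ δ⁻¹ * |g ω - g₀ ω| := by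
            rw [abs_sub_comm]
            calc |g ω - g₀ ω| * |(g ω)⁻¹| ≤ |g ω - g₀ ω| * δ⁻¹ :=
                  mul_le_mul_of_nonneg_left (hginv ω) (abs_nonneg _)
              _ = δ⁻¹ * |g ω - g₀ ω| := mul_comm _ _
          calc |g₀ ω - g ω| * |(g ω)⁻¹| * |Q₀ ω - QT ω|
              ≤ δ⁻¹ * |g ω - g₀ ω| * |Q₀ ω - QT ω| :=
                mul_le_mul_of_nonneg_right h1 (abs_nonneg _)
            _ = δ⁻¹ * (|g ω - g₀ ω| * |Q₀ ω - QT ω|) := mul_assoc _ _ _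
  -- squares: rewrite sqrt arguments
  have hsq1 : ∫ ω, (GT ω - G₀ ω) ^ 2 ∂P = ∫ ω, u ω ^ 2 ∂P := by
    refine integral_congr_ae ?_
    filter_upwards [hgae, hg₀ae] with ω h1 h2
    rw [← h1, ← h2]
    simp only [hu, sq_abs]
  have hsq2 : ∫ ω, (QT ω - Q₀ ω) ^ 2 ∂P = ∫ ω, v ω ^ 2 ∂P := by
    refine integral_congr_ae (Filter.Eventually.of_forall fun ω => ?_)
    simp only [hv, sq_abs]; ring
  rw [hid, hrw, hsq1, hsq2]
  calc |∫ ω, ((g₀ ω - g ω) / g ω) * (Q₀ ω - QT ω) ∂P|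
      ≤ ∫ ω, δ⁻¹ * (u ω * v ω) ∂P := habs
    _ = δ⁻¹ * ∫ ω, u ω * v ω ∂P := integral_const_mul _ _
    _ ≤ δ⁻¹ * (Real.sqrt (∫ ω, u ω ^ 2 ∂P) * Real.sqrt (∫ ω, v ω ^ 2 ∂P)) :=
        mul_le_mul_of_nonneg_left hCS (le_of_lt (inv_pos.2 hδ0))
    _ = δ⁻¹ * Real.sqrt (∫ ω, u ω ^ 2 ∂P) * Real.sqrt (∫ ω, v ω ^ 2 ∂P) :=
        (mul_assoc _ _ _).symm
end

section
/- Double robustness of the oracle ensemble, propensity case (first claim of the paper's double-robustness lemma for the treatment-specific mean): if the true propensity score G₀ admits a σ(T∘W)-measurable version (i.e., G₀ depends on W only through T(W); equivalently there is a measurable g₀ : ℝ^J → ℝ with G₀ = g₀∘T∘W P-a.s.), then Ψ(Q_T) = Ψ(Q₀); that is, the coordinate transformation T induces zero bias for the treatment-specific mean. -/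
open MeasureTheory

lemma integrable_of_bddMeas {Ω : Type*} [MeasurableSpace Ω] (P : Measure Ω)
    [IsFiniteMeasure P] {f : Ω → ℝ} (hf : Measurable f) {C : ℝ}
    (hb : ∀ ω, |f ω| ≤ C) : Integrable f P :=
  ⟨hf.aestronglyMeasurable,
    HasFiniteIntegral.of_bounded (ae_of_all _ fun ω => by
      simpa [Real.norm_eq_abs] using hb ω)⟩

/-- Double robustness of the oracle ensemble, propensity case: if the true propensity
score `G₀` admits a σ(T∘W)-measurable version, then `Ψ(Q_T) = Ψ(Q₀)`; the coordinate
transformation `T` induces zero bias for the treatment-specific mean. -/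
theorem stmt_10
    {Ω 𝒲 : Type*} [MeasurableSpace Ω] [MeasurableSpace 𝒲]
    (P : Measure Ω) [IsProbabilityMeasure P]
    (W : Ω → 𝒲) (A Y G₀ Q₀ : Ω → ℝ)
    (hW : Measurable W) (hA : Measurable A) (hY : Measurable Y)
    (hAbin : ∀ ω, A ω = 0 ∨ A ω = 1)
    (hYrange : ∀ ω, Y ω ∈ Set.Icc (0:ℝ) 1)
    (hG₀ : G₀ =ᵐ[P] P[A|MeasurableSpace.comap W inferInstance])
    (δ : ℝ) (hδ : δ ∈ Set.Ioo (0:ℝ) 1)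
    (hpos : ∀ᵐ ω ∂P, δ ≤ G₀ ω)
    (hQ₀meas : Measurable[MeasurableSpace.comap W inferInstance] Q₀)
    (hQ₀range : ∀ ω, Q₀ ω ∈ Set.Icc (0:ℝ) 1)
    (hQ₀orth : ∀ f : Ω → ℝ, Measurable[MeasurableSpace.comap W inferInstance] f →
      (∃ C : ℝ, ∀ ω, |f ω| ≤ C) →
      ∫ ω, A ω * (Y ω - Q₀ ω) * f ω ∂P = 0)
    {J : ℕ} (T : 𝒲 → (Fin J → ℝ)) (hT : Measurable T)
    (QT : Ω → ℝ)
    (hQTmeas : Measurable[MeasurableSpace.comap (fun ω => T (W ω)) inferInstance] QT)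
    (hQTrange : ∀ ω, QT ω ∈ Set.Icc (0:ℝ) 1)
    (hQTorth : ∀ f : Ω → ℝ,
      Measurable[MeasurableSpace.comap (fun ω => T (W ω)) inferInstance] f →
      (∃ C : ℝ, ∀ ω, |f ω| ≤ C) →
      ∫ ω, A ω * (Y ω - QT ω) * f ω ∂P = 0)
    (hg₀ : ∃ g₀ : (Fin J → ℝ) → ℝ, Measurable g₀ ∧
      G₀ =ᵐ[P] fun ω => g₀ (T (W ω))) :
    ∫ ω, QT ω ∂P = ∫ ω, Q₀ ω ∂P := by
  obtain ⟨g₀, hg₀meas, hg₀ae⟩ := hg₀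
  have hm : MeasurableSpace.comap W inferInstance ≤ ‹MeasurableSpace Ω› := hW.comap_le
  have hmT : MeasurableSpace.comap (fun ω => T (W ω)) inferInstance ≤
      MeasurableSpace.comap W inferInstance := by
    rw [show (fun ω => T (W ω)) = T ∘ W from rfl, ← MeasurableSpace.comap_comp]
    exact MeasurableSpace.comap_mono hT.comap_le
  have hδ0 : (0:ℝ) < δ := hδ.1
  set f : Ω → ℝ := fun ω => (max (g₀ (T (W ω))) δ)⁻¹ with hfdef
  have hTWmeas : Measurable[MeasurableSpace.comap (fun ω => T (W ω)) inferInstance]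
      (fun ω => T (W ω)) := measurable_iff_comap_le.mpr le_rfl
  have hfmeasT : Measurable[MeasurableSpace.comap (fun ω => T (W ω)) inferInstance] f :=
    ((hg₀meas.max measurable_const).inv).comp hTWmeas
  have hfmeas : Measurable[MeasurableSpace.comap W inferInstance] f :=
    hfmeasT.mono hmT le_rfl
  have hfmeas0 : Measurable f := hfmeas.mono hm le_rfl
  have hfpos : ∀ ω, 0 < max (g₀ (T (W ω))) δ := fun ω =>
    lt_of_lt_of_le hδ0 (le_max_right _ _)
  have hfbound : ∀ ω, |f ω| ≤ δ⁻¹ := by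
    intro ω
    rw [hfdef, abs_inv, abs_of_pos (hfpos ω)]
    exact inv_anti₀ hδ0 (le_max_right _ _)
  have hGf : ∀ᵐ ω ∂P, G₀ ω * f ω = 1 := by
    filter_upwards [hg₀ae, hpos] with ω h1 h2
    have hmx : max (g₀ (T (W ω))) δ = G₀ ω := by rw [← h1]; exact max_eq_left (h1 ▸ h2)
    rw [hfdef]
    simp only [hmx]
    exact mul_inv_cancel₀ (by linarith)
  have hAb : ∀ ω, |A ω| ≤ 1 := fun ω => by rcases hAbin ω with h | h <;> simp [h]
  have hYb : ∀ ω, |Y ω| ≤ 1 := fun ω => abs_le.2 ⟨by linarith [(hYrange ω).1], (hYrange ω).2⟩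
  have hQ₀b : ∀ ω, |Q₀ ω| ≤ 1 := fun ω => abs_le.2 ⟨by linarith [(hQ₀range ω).1], (hQ₀range ω).2⟩
  have hQTb : ∀ ω, |QT ω| ≤ 1 := fun ω => abs_le.2 ⟨by linarith [(hQTrange ω).1], (hQTrange ω).2⟩
  have hQ₀meas0 : Measurable Q₀ := hQ₀meas.mono hm le_rfl
  have hQTmeas0 : Measurable QT := hQTmeas.mono (hmT.trans hm) le_rfl
  have I1 : ∫ ω, A ω * (Y ω - Q₀ ω) * f ω ∂P = 0 :=
    hQ₀orth f hfmeas ⟨δ⁻¹, hfbound⟩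
  have I2 : ∫ ω, A ω * (Y ω - QT ω) * f ω ∂P = 0 :=
    hQTorth f hfmeasT ⟨δ⁻¹, hfbound⟩
  set h : Ω → ℝ := fun ω => (Q₀ ω - QT ω) * f ω with hhdef
  have hhmeas : Measurable[MeasurableSpace.comap W inferInstance] h :=
    (hQ₀meas.sub (hQTmeas.mono hmT le_rfl)).mul hfmeas
  have hhmeas0 : Measurable h := hhmeas.mono hm le_rfl
  have hhb : ∀ ω, |h ω| ≤ 2 * δ⁻¹ := by
    intro ω
    rw [hhdef, abs_mul]
    have h2 : |Q₀ ω - QT ω| ≤ 2 :=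
      (abs_sub _ _).trans (by linarith [hQ₀b ω, hQTb ω])
    nlinarith [hfbound ω, abs_nonneg (Q₀ ω - QT ω), abs_nonneg (f ω), inv_pos.mpr hδ0]
  have hint1 : Integrable (fun ω => A ω * (Y ω - Q₀ ω) * f ω) P :=
    integrable_of_bddMeas P (((hA.mul (hY.sub hQ₀meas0)).mul hfmeas0))
      (C := 2 * δ⁻¹) (fun ω => by
        rw [abs_mul, abs_mul]
        have hsub : |Y ω - Q₀ ω| ≤ 2 :=
          (abs_sub _ _).trans (by linarith [hYb ω, hQ₀b ω])
        have h1 : |A ω| * |Y ω - Q₀ ω| ≤ 1 * 2 :=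
          mul_le_mul (hAb ω) hsub (abs_nonneg _) zero_le_one
        have h2 : |A ω| * |Y ω - Q₀ ω| * |f ω| ≤ (1 * 2) * δ⁻¹ :=
          mul_le_mul h1 (hfbound ω) (abs_nonneg _) (by norm_num)
        linarith)
  have hint2 : Integrable (fun ω => A ω * (Y ω - QT ω) * f ω) P :=
    integrable_of_bddMeas P (((hA.mul (hY.sub hQTmeas0)).mul hfmeas0))
      (C := 2 * δ⁻¹) (fun ω => by
        rw [abs_mul, abs_mul]
        have hsub : |Y ω - QT ω| ≤ 2 :=
          (abs_sub _ _).trans (by linarith [hYb ω, hQTb ω])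
        have h1 : |A ω| * |Y ω - QT ω| ≤ 1 * 2 :=
          mul_le_mul (hAb ω) hsub (abs_nonneg _) zero_le_one
        have h2 : |A ω| * |Y ω - QT ω| * |f ω| ≤ (1 * 2) * δ⁻¹ :=
          mul_le_mul h1 (hfbound ω) (abs_nonneg _) (by norm_num)
        linarith)
  have hintA : Integrable A P := integrable_of_bddMeas P hA hAb
  have hinthA : Integrable (h * A) P :=
    integrable_of_bddMeas P (hhmeas0.mul hA) (C := 2 * δ⁻¹) (fun ω => by
      simp only [Pi.mul_apply, abs_mul]
      nlinarith [hhb ω, hAb ω, abs_nonneg (h ω), abs_nonneg (A ω), inv_pos.mpr hδ0])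
  have key0 : ∫ ω, h ω * A ω ∂P = 0 := by
    have hpt : ∀ ω, h ω * A ω =
        A ω * (Y ω - QT ω) * f ω - A ω * (Y ω - Q₀ ω) * f ω := by
      intro ω; rw [hhdef]; ring
    rw [integral_congr_ae (ae_of_all _ hpt), integral_sub hint2 hint1, I1, I2, sub_zero]
  haveI : SigmaFinite (P.trim hm) := by
    have : IsFiniteMeasure (P.trim hm) := by
      constructor
      rw [trim_measurableSet_eq hm MeasurableSet.univ]
      exact measure_lt_top _ _
    infer_instance
  have tower : ∫ ω, h ω * A ω ∂P = ∫ ω, h ω * G₀ ω ∂P := by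
    have hpull := condExp_mul_of_stronglyMeasurable_left (μ := P)
      (m := MeasurableSpace.comap W inferInstance)
      hhmeas.stronglyMeasurable hinthA hintA
    calc ∫ ω, h ω * A ω ∂P
        = ∫ ω, (P[h * A|MeasurableSpace.comap W inferInstance]) ω ∂P :=
          (integral_condExp hm).symm
      _ = ∫ ω, h ω * (P[A|MeasurableSpace.comap W inferInstance]) ω ∂P :=
          integral_congr_ae hpull
      _ = ∫ ω, h ω * G₀ ω ∂P := integral_congr_ae (by
          filter_upwards [hG₀] with ω hω; rw [hω])
  have hfinal : ∫ ω, h ω * G₀ ω ∂P = ∫ ω, (Q₀ ω - QT ω) ∂P := by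
    refine integral_congr_ae ?_
    filter_upwards [hGf] with ω hω
    rw [hhdef]
    calc (Q₀ ω - QT ω) * f ω * G₀ ω = (Q₀ ω - QT ω) * (G₀ ω * f ω) := by ring
      _ = Q₀ ω - QT ω := by rw [hω, mul_one]
  have hintQ₀ : Integrable Q₀ P := integrable_of_bddMeas P hQ₀meas0 hQ₀b
  have hintQT : Integrable QT P := integrable_of_bddMeas P hQTmeas0 hQTb
  have hzero : ∫ ω, (Q₀ ω - QT ω) ∂P = 0 := by rw [← hfinal, ← tower, key0]
  rw [integral_sub hintQ₀ hintQT] at hzero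
  linarith
end

section
/- Double robustness of the oracle ensemble, outcome case (second claim of the paper's double-robustness lemma for the treatment-specific mean): if the true outcome regression Q₀ admits a σ(T∘W)-measurable version (i.e., there is a measurable q₀ : ℝ^J → ℝ with Q₀ = q₀∘T∘W P-a.s.) and G_T ≥ δ P-a.s., then Q_T = Q₀ P-a.s., and consequently Ψ(Q_T) = Ψ(Q₀); that is, including the correct outcome model in the coordinate transformation makes the oracle ensemble equal the true function. -/
/-!
With `m = σ(T ∘ W)`, clipping `q₀ ∘ T ∘ W` to `[0, 1]` gives an `m`-measurable bounded
version `Q₀'` of `Q₀`, so `Q_T` and `Q₀'` are both `m`-measurable bounded functions whose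
residuals `A (Y - Q)` are orthogonal to bounded `m`-measurable functions. Testing both
orthogonality relations against `f = Q_T - Q₀'` and subtracting gives `∫ A f² = 0`, hence
`f A = 0` a.e. Conditioning on `m` turns this into `f E[A | m] = 0` a.e., and positivity
`E[A | m] ≥ δ > 0` forces `f = 0` a.e.
-/

open MeasureTheory

namespace MeasureTheory

variable {Ω : Type*} {m mΩ : MeasurableSpace Ω} {μ : Measure Ω}

/-- For `m`-measurable `Q`, this encodes `Q = E[Y | A = 1, m]`: the residual `A (Y - Q)` is
orthogonal to every bounded `m`-measurable function. -/
def ResidualOrthogonal (μ : Measure Ω) (m : MeasurableSpace Ω) (A Y Q : Ω → ℝ) : Prop :=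
  ∀ f : Ω → ℝ, Measurable[m] f → (∃ C : ℝ, ∀ ω, |f ω| ≤ C) →
    ∫ ω, A ω * (Y ω - Q ω) * f ω ∂μ = 0

namespace ResidualOrthogonal

variable {A Y Q Q' : Ω → ℝ}

theorem mono {m' : MeasurableSpace Ω} (hm : m' ≤ m) (hQ : ResidualOrthogonal μ m A Y Q) :
    ResidualOrthogonal μ m' A Y Q :=
  fun f hf hfC => hQ f (hf.mono hm le_rfl) hfC

theorem congr_ae (hQ : ResidualOrthogonal μ m A Y Q) (hQQ' : Q =ᵐ[μ] Q') :
    ResidualOrthogonal μ m A Y Q' := by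
  intro f hf hfC
  rw [← hQ f hf hfC]
  refine integral_congr_ae ?_
  filter_upwards [hQQ'] with ω hω
  rw [hω]

variable [IsFiniteMeasure μ]

theorem integral_mul_sq_sub_eq_zero (hm : m ≤ mΩ) (hA : Measurable A)
    (hA01 : ∀ ω, A ω ∈ Set.Icc (0 : ℝ) 1) (hY : Measurable Y)
    (hY01 : ∀ ω, Y ω ∈ Set.Icc (0 : ℝ) 1)
    (hQm : Measurable[m] Q) (hQ01 : ∀ ω, Q ω ∈ Set.Icc (0 : ℝ) 1)
    (hQ'm : Measurable[m] Q') (hQ'01 : ∀ ω, Q' ω ∈ Set.Icc (0 : ℝ) 1)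
    (hQ : ResidualOrthogonal μ m A Y Q) (hQ' : ResidualOrthogonal μ m A Y Q') :
    ∫ ω, A ω * (Q ω - Q' ω) ^ 2 ∂μ = 0 := by
  have abs_sub_le_one : ∀ {a b : ℝ}, a ∈ Set.Icc (0 : ℝ) 1 → b ∈ Set.Icc (0 : ℝ) 1 →
      |a - b| ≤ 1 := fun ha hb => abs_sub_le_of_nonneg_of_le ha.1 ha.2 hb.1 hb.2
  have hf : Measurable[m] (fun ω => Q ω - Q' ω) := hQm.sub hQ'm
  have hfC : ∀ ω, |Q ω - Q' ω| ≤ 1 := fun ω => abs_sub_le_one (hQ01 ω) (hQ'01 ω)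
  have hint : ∀ {R : Ω → ℝ}, Measurable R → (∀ ω, R ω ∈ Set.Icc (0 : ℝ) 1) →
      Integrable (fun ω => A ω * (Y ω - R ω) * (Q ω - Q' ω)) μ := by
    intro R hR hR01
    refine Integrable.of_bound
      ((hA.mul (hY.sub hR)).mul (hf.mono hm le_rfl)).aestronglyMeasurable 1
      (ae_of_all _ fun ω => ?_)
    rw [Real.norm_eq_abs, abs_mul, abs_mul, abs_of_nonneg (hA01 ω).1]
    exact mul_le_one₀
      (mul_le_one₀ (hA01 ω).2 (abs_nonneg _) (abs_sub_le_one (hY01 ω) (hR01 ω)))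
      (abs_nonneg _) (hfC ω)
  calc ∫ ω, A ω * (Q ω - Q' ω) ^ 2 ∂μ
      = ∫ ω, A ω * (Y ω - Q' ω) * (Q ω - Q' ω)
          - A ω * (Y ω - Q ω) * (Q ω - Q' ω) ∂μ := by
        congr 1; ext ω; ring
    _ = 0 := by
        rw [integral_sub (hint (hQ'm.mono hm le_rfl) hQ'01) (hint (hQm.mono hm le_rfl) hQ01),
          hQ _ hf ⟨1, hfC⟩, hQ' _ hf ⟨1, hfC⟩, sub_zero]

end ResidualOrthogonal

theorem ae_eq_zero_of_mul_ae_eq_zero_of_condExp_ne_zero {A h : Ω → ℝ}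
    (hh : StronglyMeasurable[m] h) (hA : Integrable A μ) (hhA : h * A =ᵐ[μ] 0)
    (hpos : ∀ᵐ ω ∂μ, μ[A|m] ω ≠ 0) : h =ᵐ[μ] 0 := by
  have hcond : h * μ[A|m] =ᵐ[μ] 0 := calc
    h * μ[A|m] =ᵐ[μ] μ[h * A|m] :=
      (condExp_mul_of_stronglyMeasurable_left hh (integrable_zero _ _ μ |>.congr hhA.symm) hA).symm
    _ =ᵐ[μ] μ[0|m] := condExp_congr_ae hhA
    _ = 0 := condExp_zero
  filter_upwards [hcond, hpos] with ω hω hωpos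
  exact (mul_eq_zero.mp hω).resolve_right hωpos

theorem ResidualOrthogonal.ae_eq [IsFiniteMeasure μ] {A Y Q Q' : Ω → ℝ} (hm : m ≤ mΩ)
    (hA : Measurable A) (hA01 : ∀ ω, A ω ∈ Set.Icc (0 : ℝ) 1) (hY : Measurable Y)
    (hY01 : ∀ ω, Y ω ∈ Set.Icc (0 : ℝ) 1)
    (hQm : Measurable[m] Q) (hQ01 : ∀ ω, Q ω ∈ Set.Icc (0 : ℝ) 1)
    (hQ'm : Measurable[m] Q') (hQ'01 : ∀ ω, Q' ω ∈ Set.Icc (0 : ℝ) 1)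
    (hpos : ∀ᵐ ω ∂μ, μ[A|m] ω ≠ 0)
    (hQ : ResidualOrthogonal μ m A Y Q) (hQ' : ResidualOrthogonal μ m A Y Q') :
    Q =ᵐ[μ] Q' := by
  have hsq : (fun ω => A ω * (Q ω - Q' ω) ^ 2) =ᵐ[μ] 0 := by
    refine (integral_eq_zero_iff_of_nonneg (fun ω => by have := (hA01 ω).1; positivity) ?_).mp
      (hQ.integral_mul_sq_sub_eq_zero hm hA hA01 hY hY01 hQm hQ01 hQ'm hQ'01 hQ')
    refine Integrable.of_bound
      (hA.mul (((hQm.sub hQ'm).mono hm le_rfl).pow_const 2)).aestronglyMeasurable 1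
      (ae_of_all _ fun ω => ?_)
    rw [Real.norm_eq_abs, abs_mul, abs_pow, abs_of_nonneg (hA01 ω).1]
    exact mul_le_one₀ (hA01 ω).2 (by positivity) (pow_le_one₀ (abs_nonneg _)
      (abs_sub_le_of_nonneg_of_le (hQ01 ω).1 (hQ01 ω).2 (hQ'01 ω).1 (hQ'01 ω).2))
  have hAint : Integrable A μ :=
    Integrable.of_bound hA.aestronglyMeasurable 1 (ae_of_all _ fun ω => by
      rw [Real.norm_eq_abs, abs_of_nonneg (hA01 ω).1]; exact (hA01 ω).2)
  have hmul : (Q - Q') * A =ᵐ[μ] 0 := by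
    filter_upwards [hsq] with ω hω
    have hω : A ω * (Q ω - Q' ω) ^ 2 = 0 := hω
    rcases mul_eq_zero.mp hω with h | h
    · simp [h]
    · simp [pow_eq_zero_iff two_ne_zero |>.mp h]
  filter_upwards [ae_eq_zero_of_mul_ae_eq_zero_of_condExp_ne_zero
    (hQm.sub hQ'm).stronglyMeasurable hAint hmul hpos] with ω hω
  exact sub_eq_zero.mp hω

end MeasureTheory

theorem stmt_11_general
    {Ω 𝒲 : Type*} [MeasurableSpace Ω] [MeasurableSpace 𝒲]
    (P : Measure Ω) [IsProbabilityMeasure P]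
    (W : Ω → 𝒲) (A Y Q₀ : Ω → ℝ)
    (hW : Measurable W) (hA : Measurable A) (hY : Measurable Y)
    (hAbin : ∀ ω, A ω = 0 ∨ A ω = 1)
    (hYrange : ∀ ω, Y ω ∈ Set.Icc (0:ℝ) 1)
    (hQ₀range : ∀ ω, Q₀ ω ∈ Set.Icc (0:ℝ) 1)
    (hQ₀orth : ∀ f : Ω → ℝ, Measurable[MeasurableSpace.comap W inferInstance] f →
      (∃ C : ℝ, ∀ ω, |f ω| ≤ C) →
      ∫ ω, A ω * (Y ω - Q₀ ω) * f ω ∂P = 0)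
    {J : ℕ} (T : 𝒲 → (Fin J → ℝ)) (hT : Measurable T)
    (QT : Ω → ℝ)
    (hQTmeas : Measurable[MeasurableSpace.comap (fun ω => T (W ω)) inferInstance] QT)
    (hQTrange : ∀ ω, QT ω ∈ Set.Icc (0:ℝ) 1)
    (hQTorth : ∀ f : Ω → ℝ,
      Measurable[MeasurableSpace.comap (fun ω => T (W ω)) inferInstance] f →
      (∃ C : ℝ, ∀ ω, |f ω| ≤ C) →
      ∫ ω, A ω * (Y ω - QT ω) * f ω ∂P = 0)
    (GT : Ω → ℝ)
    (hGT : GT =ᵐ[P] P[A|MeasurableSpace.comap (fun ω => T (W ω)) inferInstance])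
    (δ : ℝ) (hδ : δ ∈ Set.Ioo (0:ℝ) 1)
    (hGTpos : ∀ᵐ ω ∂P, δ ≤ GT ω)
    (hq₀ : ∃ q₀ : (Fin J → ℝ) → ℝ, Measurable q₀ ∧
      Q₀ =ᵐ[P] fun ω => q₀ (T (W ω))) :
    QT =ᵐ[P] Q₀ ∧ ∫ ω, QT ω ∂P = ∫ ω, Q₀ ω ∂P := by
  obtain ⟨q₀, hq₀, hQ₀q₀⟩ := hq₀
  have hm : MeasurableSpace.comap (T ∘ W) inferInstance ≤ ‹MeasurableSpace Ω› :=
    (hT.comp hW).comap_le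
  have hmW :
      MeasurableSpace.comap (T ∘ W) inferInstance ≤ MeasurableSpace.comap W inferInstance := by
    rw [← MeasurableSpace.comap_comp]
    exact MeasurableSpace.comap_mono hT.comap_le
  set m := MeasurableSpace.comap (fun ω => T (W ω)) inferInstance
  set Q₀' : Ω → ℝ := fun ω => Set.projIcc 0 1 zero_le_one (q₀ (T (W ω)))
  have hQ₀'m : Measurable[m] Q₀' :=
    measurable_subtype_coe.comp (continuous_projIcc.measurable.comp hq₀)
      |>.comp (Measurable.of_comap_le le_rfl)
  have hQ₀Q₀' : Q₀ =ᵐ[P] Q₀' := by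
    filter_upwards [hQ₀q₀] with ω hω
    simp only [Q₀', ← hω, Set.projIcc_of_mem zero_le_one (hQ₀range ω)]
  have hA01 : ∀ ω, A ω ∈ Set.Icc (0 : ℝ) 1 := fun ω => by
    rcases hAbin ω with h | h <;> simp [h]
  have hpos : ∀ᵐ ω ∂P, P[A|m] ω ≠ 0 := by
    filter_upwards [hGT, hGTpos] with ω hω hδω
    exact (hω ▸ hδ.1.trans_le hδω).ne'
  have hQTQ₀' : QT =ᵐ[P] Q₀' :=
    ResidualOrthogonal.ae_eq hm hA hA01 hY hYrange hQTmeas hQTrange hQ₀'m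
      (fun ω => Subtype.prop _) hpos hQTorth
      ((ResidualOrthogonal.mono hmW hQ₀orth).congr_ae hQ₀Q₀')
  have hQTQ₀ : QT =ᵐ[P] Q₀ := hQTQ₀'.trans hQ₀Q₀'.symm
  exact ⟨hQTQ₀, integral_congr_ae hQTQ₀⟩

/-- Double robustness of the oracle ensemble, outcome case: if the true outcome
regression `Q₀` admits a σ(T∘W)-measurable version and `G_T ≥ δ` a.s., then
`Q_T = Q₀` P-a.s., and consequently `Ψ(Q_T) = Ψ(Q₀)`. -/
theorem stmt_11
    {Ω 𝒲 : Type*} [MeasurableSpace Ω] [MeasurableSpace 𝒲]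
    (P : Measure Ω) [IsProbabilityMeasure P]
    (W : Ω → 𝒲) (A Y Q₀ : Ω → ℝ)
    (hW : Measurable W) (hA : Measurable A) (hY : Measurable Y)
    (hAbin : ∀ ω, A ω = 0 ∨ A ω = 1)
    (hYrange : ∀ ω, Y ω ∈ Set.Icc (0:ℝ) 1)
    (hQ₀meas : Measurable[MeasurableSpace.comap W inferInstance] Q₀)
    (hQ₀range : ∀ ω, Q₀ ω ∈ Set.Icc (0:ℝ) 1)
    (hQ₀orth : ∀ f : Ω → ℝ, Measurable[MeasurableSpace.comap W inferInstance] f →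
      (∃ C : ℝ, ∀ ω, |f ω| ≤ C) →
      ∫ ω, A ω * (Y ω - Q₀ ω) * f ω ∂P = 0)
    {J : ℕ} (T : 𝒲 → (Fin J → ℝ)) (hT : Measurable T)
    (QT : Ω → ℝ)
    (hQTmeas : Measurable[MeasurableSpace.comap (fun ω => T (W ω)) inferInstance] QT)
    (hQTrange : ∀ ω, QT ω ∈ Set.Icc (0:ℝ) 1)
    (hQTorth : ∀ f : Ω → ℝ,
      Measurable[MeasurableSpace.comap (fun ω => T (W ω)) inferInstance] f →
      (∃ C : ℝ, ∀ ω, |f ω| ≤ C) →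
      ∫ ω, A ω * (Y ω - QT ω) * f ω ∂P = 0)
    (GT : Ω → ℝ)
    (hGT : GT =ᵐ[P] P[A|MeasurableSpace.comap (fun ω => T (W ω)) inferInstance])
    (δ : ℝ) (hδ : δ ∈ Set.Ioo (0:ℝ) 1)
    (hGTpos : ∀ᵐ ω ∂P, δ ≤ GT ω)
    (hq₀ : ∃ q₀ : (Fin J → ℝ) → ℝ, Measurable q₀ ∧
      Q₀ =ᵐ[P] fun ω => q₀ (T (W ω))) :
    QT =ᵐ[P] Q₀ ∧ ∫ ω, QT ω ∂P = ∫ ω, Q₀ ω ∂P :=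
  stmt_11_general P W A Y Q₀ hW hA hY hAbin hYrange hQ₀range hQ₀orth T hT QT hQTmeas hQTrange
    hQTorth GT hGT δ hδ hGTpos hq₀
end

section
/- Nuisance-replacement identity (the paper's equation (z2) chain): let H* be a version of E[A | σ(Q_T, Q₀)], where σ(Q_T, Q₀) is the σ-algebra generated by the pair of random variables (Q_T, Q₀), and assume H* ≥ δ P-a.s. and G₀ ≥ δ P-a.s. Then E[(A/H*)·(Y − Q_T)] = E[Q₀ − Q_T] = E[(A/G₀)·(Y − Q_T)]; that is, replacing the true propensity G₀ by the coarsened propensity H* leaves the mean of the canonical gradient at Q_T unchanged. -/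
open MeasureTheory

private lemma integrable_of_bdd {Ω : Type*} [MeasurableSpace Ω] {P : Measure Ω}
    [IsProbabilityMeasure P] {f : Ω → ℝ} (hf : Measurable f) {C : ℝ}
    (hC : ∀ ω, |f ω| ≤ C) : Integrable f P :=
  (integrable_const C).mono' hf.aestronglyMeasurable
    (Filter.Eventually.of_forall fun ω => by simpa using hC ω)

/-- Pull-out identity: `∫ A g = ∫ E[A|m] g` for `m`-measurable bounded `g`. -/
private lemma integral_mul_condexp {Ω : Type*} [m0 : MeasurableSpace Ω] (P : Measure Ω)
    [IsProbabilityMeasure P] {m : MeasurableSpace Ω} (hm : m ≤ m0)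
    {A g : Ω → ℝ} (hA : Measurable[m0] A) (hAb : ∀ ω, |A ω| ≤ 1)
    (hg : Measurable[m] g) {C : ℝ} (hgb : ∀ ω, |g ω| ≤ C) :
    ∫ ω, A ω * g ω ∂P = ∫ ω, (P[A|m]) ω * g ω ∂P := by
  letI : MeasurableSpace Ω := m0
  have hgm : Measurable[m0] g := hg.mono hm le_rfl
  have hintA : Integrable A P := integrable_of_bdd hA hAb
  have hint : Integrable (g * A) P := by
    refine integrable_of_bdd (Ω := Ω) (hgm.mul hA) (C := |C|) fun ω => ?_
    calc |g ω * A ω| = |g ω| * |A ω| := abs_mul _ _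
      _ ≤ |C| * 1 :=
          mul_le_mul ((hgb ω).trans (le_abs_self C)) (hAb ω) (abs_nonneg _) (abs_nonneg _)
      _ = |C| := mul_one _
  have h1 : ∫ ω, g ω * A ω ∂P = ∫ ω, (P[g * A|m]) ω ∂P := (integral_condExp hm).symm
  have h2 : P[g * A|m] =ᵐ[P] g * P[A|m] :=
    condExp_mul_of_stronglyMeasurable_left hg.stronglyMeasurable hint hintA
  calc ∫ ω, A ω * g ω ∂P = ∫ ω, g ω * A ω ∂P := by simp_rw [mul_comm]
    _ = ∫ ω, (P[g * A|m]) ω ∂P := h1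
    _ = ∫ ω, (g * P[A|m]) ω ∂P := integral_congr_ae h2
    _ = ∫ ω, (P[A|m]) ω * g ω ∂P := by simp_rw [Pi.mul_apply, mul_comm]

/-- Nuisance-replacement identity (the paper's (z2) chain): with `H*` a version of
`E[A | σ(Q_T, Q₀)]` bounded below by `δ`, one has
`E[(A/H*)(Y − Q_T)] = E[Q₀ − Q_T] = E[(A/G₀)(Y − Q_T)]`. -/
theorem stmt_13
    {Ω 𝒲 : Type*} [MeasurableSpace Ω] [MeasurableSpace 𝒲]
    (P : Measure Ω) [IsProbabilityMeasure P]
    (W : Ω → 𝒲) (A Y G₀ Q₀ : Ω → ℝ)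
    (hW : Measurable W) (hA : Measurable A) (hY : Measurable Y)
    (hAbin : ∀ ω, A ω = 0 ∨ A ω = 1)
    (hYrange : ∀ ω, Y ω ∈ Set.Icc (0:ℝ) 1)
    (hG₀ : G₀ =ᵐ[P] P[A|MeasurableSpace.comap W inferInstance])
    (δ : ℝ) (hδ : δ ∈ Set.Ioo (0:ℝ) 1)
    (hpos : ∀ᵐ ω ∂P, δ ≤ G₀ ω)
    (hQ₀meas : Measurable[MeasurableSpace.comap W inferInstance] Q₀)
    (hQ₀range : ∀ ω, Q₀ ω ∈ Set.Icc (0:ℝ) 1)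
    (hQ₀orth : ∀ f : Ω → ℝ, Measurable[MeasurableSpace.comap W inferInstance] f →
      (∃ C : ℝ, ∀ ω, |f ω| ≤ C) →
      ∫ ω, A ω * (Y ω - Q₀ ω) * f ω ∂P = 0)
    {J : ℕ} (T : 𝒲 → (Fin J → ℝ)) (hT : Measurable T)
    (QT : Ω → ℝ)
    (hQTmeas : Measurable[MeasurableSpace.comap (fun ω => T (W ω)) inferInstance] QT)
    (hQTrange : ∀ ω, QT ω ∈ Set.Icc (0:ℝ) 1)
    (hQTorth : ∀ f : Ω → ℝ,
      Measurable[MeasurableSpace.comap (fun ω => T (W ω)) inferInstance] f →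
      (∃ C : ℝ, ∀ ω, |f ω| ≤ C) →
      ∫ ω, A ω * (Y ω - QT ω) * f ω ∂P = 0)
    (Hstar : Ω → ℝ)
    (hHstar : Hstar =ᵐ[P]
      P[A|MeasurableSpace.comap (fun ω => (QT ω, Q₀ ω)) inferInstance])
    (hHstarpos : ∀ᵐ ω ∂P, δ ≤ Hstar ω) :
    (∫ ω, (A ω / Hstar ω) * (Y ω - QT ω) ∂P) = (∫ ω, (Q₀ ω - QT ω) ∂P) ∧
      (∫ ω, (Q₀ ω - QT ω) ∂P) = ∫ ω, (A ω / G₀ ω) * (Y ω - QT ω) ∂P := by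
  rename_i mΩ m𝒲 hPP
  have hδ0 : (0:ℝ) < δ := hδ.1
  have hAb : ∀ ω, |A ω| ≤ 1 := fun ω => by rcases hAbin ω with h | h <;> simp [h]
  have hQdiffb : ∀ ω, |Q₀ ω - QT ω| ≤ 1 := fun ω => by
    rcases hQ₀range ω with ⟨h1, h2⟩; rcases hQTrange ω with ⟨h3, h4⟩
    rw [abs_le]; constructor <;> linarith
  -- measurable space bookkeeping
  have hmWle : MeasurableSpace.comap W inferInstance ≤ mΩ := hW.comap_le
  have hWmW : Measurable[MeasurableSpace.comap W inferInstance] W :=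
    Measurable.of_comap_le le_rfl
  have hTW : Measurable[MeasurableSpace.comap W inferInstance] fun ω => T (W ω) :=
    hT.comp hWmW
  have hmTle : MeasurableSpace.comap (fun ω => T (W ω)) inferInstance
      ≤ MeasurableSpace.comap W inferInstance := hTW.comap_le
  have hQTmW : Measurable[MeasurableSpace.comap W inferInstance] QT :=
    hQTmeas.mono hmTle le_rfl
  have hpairmW : Measurable[MeasurableSpace.comap W inferInstance]
      fun ω => (QT ω, Q₀ ω) := hQTmW.prodMk hQ₀meas
  have hmHle : MeasurableSpace.comap (fun ω => (QT ω, Q₀ ω)) inferInstance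
      ≤ MeasurableSpace.comap W inferInstance := hpairmW.comap_le
  have hpairmH : Measurable[MeasurableSpace.comap (fun ω => (QT ω, Q₀ ω)) inferInstance]
      fun ω => (QT ω, Q₀ ω) := Measurable.of_comap_le le_rfl
  have hQTmH : Measurable[MeasurableSpace.comap (fun ω => (QT ω, Q₀ ω)) inferInstance]
      QT := measurable_fst.comp hpairmH
  have hQ₀mH : Measurable[MeasurableSpace.comap (fun ω => (QT ω, Q₀ ω)) inferInstance]
      Q₀ := measurable_snd.comp hpairmH
  -- the generic argument for both sides
  have main : ∀ (m : MeasurableSpace Ω), m ≤ MeasurableSpace.comap W inferInstance →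
      ∀ (K : Ω → ℝ), (K =ᵐ[P] P[A|m]) → (∀ᵐ ω ∂P, δ ≤ K ω) →
      Measurable[m] Q₀ → Measurable[m] QT →
      ∫ ω, (A ω / K ω) * (Y ω - QT ω) ∂P = ∫ ω, (Q₀ ω - QT ω) ∂P := by
    intro m hmw K hK hKpos hQ₀m hQTm
    letI : MeasurableSpace Ω := mΩ
    have hm : m ≤ mΩ := hmw.trans hmWle
    set K' : Ω → ℝ := P[A|m] with hK'
    have hK'm : Measurable[m] K' := stronglyMeasurable_condExp.measurable
    set f : Ω → ℝ := fun ω => (max (K' ω) δ)⁻¹ with hf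
    have hfm : Measurable[m] f := (hK'm.max measurable_const).inv
    have hfb : ∀ ω, |f ω| ≤ δ⁻¹ := by
      intro ω
      have h1 : δ ≤ max (K' ω) δ := le_max_right _ _
      have h2 : (0:ℝ) < max (K' ω) δ := lt_of_lt_of_le hδ0 h1
      rw [abs_of_nonneg (inv_nonneg.mpr h2.le)]
      exact inv_anti₀ hδ0 h1
    have hfmeas : Measurable[mΩ] f := hfm.mono hm le_rfl
    set g : Ω → ℝ := fun ω => (Q₀ ω - QT ω) * f ω with hg
    have hgm : Measurable[m] g := (hQ₀m.sub hQTm).mul hfm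
    have hgb : ∀ ω, |g ω| ≤ δ⁻¹ := by
      intro ω
      calc |g ω| = |Q₀ ω - QT ω| * |f ω| := abs_mul _ _
        _ ≤ 1 * δ⁻¹ := mul_le_mul (hQdiffb ω) (hfb ω) (abs_nonneg _) zero_le_one
        _ = δ⁻¹ := one_mul _
    have hK'pos : ∀ᵐ ω ∂P, δ ≤ K' ω := by
      filter_upwards [hKpos, hK] with ω h1 h2
      rw [← h2]; exact h1
    -- orthogonality term vanishes
    have horth : ∫ ω, A ω * (Y ω - Q₀ ω) * f ω ∂P = 0 :=
      hQ₀orth f (hfm.mono hmw le_rfl) ⟨δ⁻¹, hfb⟩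
    -- pull-out term
    have hpull : ∫ ω, A ω * g ω ∂P = ∫ ω, K' ω * g ω ∂P :=
      integral_mul_condexp P hm hA hAb hgm hgb
    have hK'g : ∫ ω, K' ω * g ω ∂P = ∫ ω, (Q₀ ω - QT ω) ∂P := by
      refine integral_congr_ae ?_
      filter_upwards [hK'pos] with ω hω
      have hKne : K' ω ≠ 0 := (lt_of_lt_of_le hδ0 hω).ne'
      have hmax : max (K' ω) δ = K' ω := max_eq_left hω
      simp only [hg, hf, hmax]
      field_simp
    -- rewrite the LHS integrand a.e.
    have hLHS : ∫ ω, (A ω / K ω) * (Y ω - QT ω) ∂P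
        = ∫ ω, A ω * (Y ω - QT ω) * f ω ∂P := by
      refine integral_congr_ae ?_
      filter_upwards [hKpos, hK] with ω h1 h2
      have hfval : f ω = (K ω)⁻¹ := by
        simp only [hf]
        rw [max_eq_left (h2 ▸ h1), ← h2]
      rw [hfval, div_eq_mul_inv]; ring
    -- split the integral
    have hsplit : ∀ ω, A ω * (Y ω - QT ω) * f ω
        = A ω * (Y ω - Q₀ ω) * f ω + A ω * g ω := by
      intro ω; simp only [hg]; ring
    have hint1 : Integrable (fun ω => A ω * (Y ω - Q₀ ω) * f ω) P := by
      refine integrable_of_bdd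
        ((hA.mul (hY.sub (hQ₀meas.mono hmWle le_rfl))).mul hfmeas) (C := δ⁻¹) ?_
      intro ω
      have hY1 : |Y ω - Q₀ ω| ≤ 1 := by
        rcases hYrange ω with ⟨a, b⟩; rcases hQ₀range ω with ⟨c, d⟩
        rw [abs_le]; constructor <;> linarith
      calc |A ω * (Y ω - Q₀ ω) * f ω| = |A ω| * |Y ω - Q₀ ω| * |f ω| := by
            rw [abs_mul, abs_mul]
        _ ≤ 1 * 1 * δ⁻¹ :=
            mul_le_mul (mul_le_mul (hAb ω) hY1 (abs_nonneg _) zero_le_one)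
              (hfb ω) (abs_nonneg _) (by norm_num)
        _ = δ⁻¹ := by ring
    have hint2 : Integrable (fun ω => A ω * g ω) P := by
      refine integrable_of_bdd (hA.mul (hgm.mono hm le_rfl)) (C := δ⁻¹) ?_
      intro ω
      calc |A ω * g ω| = |A ω| * |g ω| := abs_mul _ _
        _ ≤ 1 * δ⁻¹ := mul_le_mul (hAb ω) (hgb ω) (abs_nonneg _) zero_le_one
        _ = δ⁻¹ := one_mul _
    calc ∫ ω, (A ω / K ω) * (Y ω - QT ω) ∂P
        = ∫ ω, A ω * (Y ω - QT ω) * f ω ∂P := hLHS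
      _ = ∫ ω, (A ω * (Y ω - Q₀ ω) * f ω + A ω * g ω) ∂P := by simp_rw [hsplit]
      _ = (∫ ω, A ω * (Y ω - Q₀ ω) * f ω ∂P) + ∫ ω, A ω * g ω ∂P :=
          integral_add hint1 hint2
      _ = ∫ ω, A ω * g ω ∂P := by rw [horth, zero_add]
      _ = ∫ ω, K' ω * g ω ∂P := hpull
      _ = ∫ ω, (Q₀ ω - QT ω) ∂P := hK'g
  constructor
  · exact main _ hmHle Hstar hHstar hHstarpos hQ₀mH hQTmH
  · exact (main _ le_rfl G₀ hG₀ hpos hQ₀meas hQTmW).symm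
end

section
/- Deterministic core of the paper's lemma on the second-order bias of the oracle estimator for the treatment-specific mean: let H be a version of E[A | σ(Q_T)] and H* a version of E[A | σ(Q_T, Q₀)], where σ(Q_T) and σ(Q_T, Q₀) are the σ-algebras generated by Q_T and by the pair (Q_T, Q₀) respectively, and assume H ≥ δ and H* ≥ δ P-a.s. as well as G₀ ≥ δ P-a.s. Then |Ψ(Q_T) − Ψ(Q₀)| ≤ δ^{−2}·‖H* − H‖_{L²(P)}·‖Q_T − Q₀‖_{L²(P)}. -/
open MeasureTheory

/-!
Put `D = Q_T - Q₀`, `h = E[A | Q_T]` and `h* = E[A | Q_T, Q₀]`. Both `Q_T` and `Q₀` are regressions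
of `Y` among the treated on σ-algebras containing `σ(Q_T)`, so `E[A D f] = 0` for every bounded
`σ(Q_T)`-measurable `f`, in particular for `f = 1/h`. As `D/h` is `σ(Q_T, Q₀)`-measurable, the
tower property turns this into `E[h* D/h] = 0`, whence `E[D] = E[(h - h*) D/h]`. Cauchy–Schwarz
and `1/h ≤ 1/δ ≤ 1/δ²` finish the proof.
-/

theorem abs_inv_max_le_inv {δ : ℝ} (hδ : 0 < δ) (x : ℝ) : |(max x δ)⁻¹| ≤ δ⁻¹ := by
  rw [abs_of_pos (inv_pos.2 (lt_max_of_lt_right hδ))]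
  exact inv_anti₀ hδ (le_max_right _ _)

section Lp

variable {α : Type*} [MeasurableSpace α] {μ : Measure α}

theorem memLp_of_mem_Icc [IsFiniteMeasure μ] {p : ENNReal} {f : α → ℝ} {a b : ℝ}
    (hf : AEStronglyMeasurable f μ) (hab : ∀ x, f x ∈ Set.Icc a b) : MemLp f p μ :=
  .of_bound hf (max |a| |b|) (ae_of_all _ fun x => abs_le_max_abs_abs (hab x).1 (hab x).2)

theorem integral_abs_mul_le_sqrt_mul_sqrt {f g : α → ℝ} (hf : MemLp f 2 μ) (hg : MemLp g 2 μ) :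
    ∫ x, |f x * g x| ∂μ ≤ √(∫ x, f x ^ 2 ∂μ) * √(∫ x, g x ^ 2 ∂μ) := by
  have h := integral_mul_norm_le_Lp_mul_Lq (μ := μ) Real.HolderConjugate.two_two
    (by simpa using hf) (by simpa using hg)
  simpa [abs_mul, Real.rpow_two, Real.sqrt_eq_rpow] using h

theorem abs_integral_mul_mul_le {f w g : α → ℝ} {c : ℝ} (hc : 0 ≤ c) (hf : MemLp f 2 μ)
    (hg : MemLp g 2 μ) (hw : ∀ᵐ x ∂μ, |w x| ≤ c) :
    |∫ x, f x * w x * g x ∂μ| ≤ c * √(∫ x, f x ^ 2 ∂μ) * √(∫ x, g x ^ 2 ∂μ) := by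
  calc |∫ x, f x * w x * g x ∂μ|
      ≤ ∫ x, |f x * w x * g x| ∂μ := abs_integral_le_integral_abs
    _ ≤ ∫ x, c * |f x * g x| ∂μ := by
        refine integral_mono_of_nonneg (ae_of_all _ fun x => abs_nonneg _)
          ((hf.integrable_mul hg).abs.const_mul c) (hw.mono fun x hx => ?_)
        dsimp only
        rw [abs_mul, abs_mul, abs_mul, mul_right_comm, mul_comm c]
        gcongr
    _ = c * ∫ x, |f x * g x| ∂μ := integral_const_mul _ _
    _ ≤ c * (√(∫ x, f x ^ 2 ∂μ) * √(∫ x, g x ^ 2 ∂μ)) := by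
        gcongr
        exact integral_abs_mul_le_sqrt_mul_sqrt hf hg
    _ = c * √(∫ x, f x ^ 2 ∂μ) * √(∫ x, g x ^ 2 ∂μ) := (mul_assoc _ _ _).symm

end Lp

section WeightedOrthogonal

variable {Ω : Type*} {m m₁ m₂ mΩ : MeasurableSpace Ω} {P : Measure Ω}

/-- With `D = Y - Q` this says that `Q = E[Y | A = 1, m]`. -/
def WeightedOrthogonal (P : Measure Ω) (m : MeasurableSpace Ω) (A D : Ω → ℝ) : Prop :=
  ∀ f : Ω → ℝ, Measurable[m] f → (∃ C : ℝ, ∀ ω, |f ω| ≤ C) → ∫ ω, A ω * D ω * f ω ∂P = 0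

theorem WeightedOrthogonal.mono {A D : Ω → ℝ} (h : WeightedOrthogonal P m₂ A D) (hm : m₁ ≤ m₂) :
    WeightedOrthogonal P m₁ A D :=
  fun f hf hfC => h f (hf.mono hm le_rfl) hfC

variable [IsFiniteMeasure P]

theorem WeightedOrthogonal.sub {A D₁ D₂ : Ω → ℝ} (hm : m ≤ mΩ)
    (hA : MemLp A ⊤ P) (hD₁ : MemLp D₁ ⊤ P) (hD₂ : MemLp D₂ ⊤ P)
    (h₁ : WeightedOrthogonal P m A D₁) (h₂ : WeightedOrthogonal P m A D₂) :
    WeightedOrthogonal P m A (D₁ - D₂) := by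
  rintro f hf ⟨C, hC⟩
  have hf' : MemLp f ⊤ P := .of_bound (hf.mono hm le_rfl).aestronglyMeasurable C (ae_of_all _ hC)
  have hint : ∀ D, MemLp D ⊤ P → Integrable (fun ω => A ω * D ω * f ω) P :=
    fun D hD => (hf'.mul' (r := ⊤) (hD.mul' (r := ⊤) hA)).integrable le_top
  simp only [Pi.sub_apply, mul_sub, sub_mul]
  rw [integral_sub (hint _ hD₁) (hint _ hD₂), h₁ f hf ⟨C, hC⟩, h₂ f hf ⟨C, hC⟩, sub_zero]

theorem integral_mul_condExp_of_stronglyMeasurable (hm : m ≤ mΩ) {g A : Ω → ℝ}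
    (hg : StronglyMeasurable[m] g) (hgA : Integrable (g * A) P) (hA : Integrable A P) :
    ∫ ω, g ω * P[A|m] ω ∂P = ∫ ω, g ω * A ω ∂P :=
  calc ∫ ω, g ω * P[A|m] ω ∂P = ∫ ω, P[g * A|m] ω ∂P :=
        integral_congr_ae (condExp_mul_of_stronglyMeasurable_left hg hgA hA).symm
    _ = ∫ ω, g ω * A ω ∂P := integral_condExp hm

/-- The weight `(max h δ)⁻¹` agrees a.e. with `1 / h` but, unlike it, is bounded everywhere. -/
theorem WeightedOrthogonal.integral_eq_integral_mul_condExp_sub {A D : Ω → ℝ}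
    (horth : WeightedOrthogonal P m₁ A D) (hm₁₂ : m₁ ≤ m₂) (hm₂ : m₂ ≤ mΩ) {δ : ℝ} (hδ : 0 < δ)
    (hA : MemLp A 2 P) (hD : Measurable[m₂] D) (hD2 : MemLp D 2 P)
    (hpos : ∀ᵐ ω ∂P, δ ≤ P[A|m₁] ω) :
    ∫ ω, D ω ∂P = ∫ ω, D ω * (max (P[A|m₁] ω) δ)⁻¹ * (P[A|m₁] ω - P[A|m₂] ω) ∂P := by
  set h := P[A|m₁]
  set hs := P[A|m₂]
  set w : Ω → ℝ := fun ω => (max (h ω) δ)⁻¹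
  have hw : Measurable[m₁] w := (stronglyMeasurable_condExp.measurable.max measurable_const).inv
  have hw_top : MemLp w ⊤ P := .of_bound (hw.mono (hm₁₂.trans hm₂) le_rfl).aestronglyMeasurable
    δ⁻¹ (ae_of_all _ fun ω => abs_inv_max_le_inv hδ _)
  set g : Ω → ℝ := D * w
  have hg2 : MemLp g 2 P := hw_top.mul hD2
  have hgA : ∫ ω, g ω * A ω ∂P = 0 := by
    rw [← horth w hw ⟨δ⁻¹, fun ω => abs_inv_max_le_inv hδ _⟩]
    congr 1; ext ω; simp only [g, Pi.mul_apply]; ring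
  have hghs : ∫ ω, g ω * hs ω ∂P = 0 :=
    (integral_mul_condExp_of_stronglyMeasurable hm₂
      (hD.mul (hw.mono hm₁₂ le_rfl)).stronglyMeasurable (hg2.integrable_mul hA)
      (hA.integrable one_le_two)).trans hgA
  calc ∫ ω, D ω ∂P = ∫ ω, g ω * h ω ∂P := integral_congr_ae <| hpos.mono fun ω hω => by
        simp only [g, w, Pi.mul_apply, max_eq_left hω, mul_assoc,
          inv_mul_cancel₀ (hδ.trans_le hω).ne', mul_one]
    _ = ∫ ω, g ω * h ω ∂P - ∫ ω, g ω * hs ω ∂P := by rw [hghs, sub_zero]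
    _ = ∫ ω, g ω * (h ω - hs ω) ∂P := by
        simp only [mul_sub]
        exact (integral_sub (hg2.integrable_mul (hA.condExp one_le_two))
          (hg2.integrable_mul (hA.condExp one_le_two))).symm

theorem WeightedOrthogonal.abs_integral_le {A D H Hs : Ω → ℝ}
    (horth : WeightedOrthogonal P m₁ A D) (hm₁₂ : m₁ ≤ m₂) (hm₂ : m₂ ≤ mΩ) {δ : ℝ} (hδ : 0 < δ)
    (hA : MemLp A 2 P) (hD : Measurable[m₂] D) (hD2 : MemLp D 2 P)
    (hH : H =ᵐ[P] P[A|m₁]) (hHs : Hs =ᵐ[P] P[A|m₂]) (hpos : ∀ᵐ ω ∂P, δ ≤ H ω) :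
    |∫ ω, D ω ∂P| ≤ δ⁻¹ * √(∫ ω, (Hs ω - H ω) ^ 2 ∂P) * √(∫ ω, D ω ^ 2 ∂P) := by
  have hpos' : ∀ᵐ ω ∂P, δ ≤ P[A|m₁] ω := by
    filter_upwards [hH, hpos] with ω hω hδω
    rwa [← hω]
  have hL2 : ∫ ω, (Hs ω - H ω) ^ 2 ∂P = ∫ ω, (P[A|m₁] ω - P[A|m₂] ω) ^ 2 ∂P := by
    refine integral_congr_ae ?_
    filter_upwards [hH, hHs] with ω hω hsω
    rw [hω, hsω]
    ring
  rw [horth.integral_eq_integral_mul_condExp_sub hm₁₂ hm₂ hδ hA hD hD2 hpos', hL2,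
    mul_right_comm]
  exact abs_integral_mul_mul_le (inv_nonneg.2 hδ.le) hD2
    ((hA.condExp one_le_two).sub (hA.condExp one_le_two))
    (ae_of_all _ fun ω => abs_inv_max_le_inv hδ _)

end WeightedOrthogonal

theorem stmt_14_general
    {Ω 𝒲 : Type*} [MeasurableSpace Ω] [MeasurableSpace 𝒲]
    (P : Measure Ω) [IsProbabilityMeasure P]
    (W : Ω → 𝒲) (A Y Q₀ : Ω → ℝ)
    (hW : Measurable W) (hA : Measurable A) (hY : Measurable Y)
    (hAbin : ∀ ω, A ω = 0 ∨ A ω = 1)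
    (hYrange : ∀ ω, Y ω ∈ Set.Icc (0:ℝ) 1)
    (δ : ℝ) (hδ : δ ∈ Set.Ioo (0:ℝ) 1)
    (hQ₀meas : Measurable[MeasurableSpace.comap W inferInstance] Q₀)
    (hQ₀range : ∀ ω, Q₀ ω ∈ Set.Icc (0:ℝ) 1)
    (hQ₀orth : ∀ f : Ω → ℝ, Measurable[MeasurableSpace.comap W inferInstance] f →
      (∃ C : ℝ, ∀ ω, |f ω| ≤ C) →
      ∫ ω, A ω * (Y ω - Q₀ ω) * f ω ∂P = 0)
    {J : ℕ} (T : 𝒲 → (Fin J → ℝ)) (hT : Measurable T)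
    (QT : Ω → ℝ)
    (hQTmeas : Measurable[MeasurableSpace.comap (fun ω => T (W ω)) inferInstance] QT)
    (hQTrange : ∀ ω, QT ω ∈ Set.Icc (0:ℝ) 1)
    (hQTorth : ∀ f : Ω → ℝ,
      Measurable[MeasurableSpace.comap (fun ω => T (W ω)) inferInstance] f →
      (∃ C : ℝ, ∀ ω, |f ω| ≤ C) →
      ∫ ω, A ω * (Y ω - QT ω) * f ω ∂P = 0)
    (H Hstar : Ω → ℝ)
    (hH : H =ᵐ[P] P[A|MeasurableSpace.comap QT inferInstance])
    (hHstar : Hstar =ᵐ[P]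
      P[A|MeasurableSpace.comap (fun ω => (QT ω, Q₀ ω)) inferInstance])
    (hHpos : ∀ᵐ ω ∂P, δ ≤ H ω) :
    |(∫ ω, QT ω ∂P) - (∫ ω, Q₀ ω ∂P)|
      ≤ (δ ^ 2)⁻¹ * Real.sqrt (∫ ω, (Hstar ω - H ω) ^ 2 ∂P)
          * Real.sqrt (∫ ω, (QT ω - Q₀ ω) ^ 2 ∂P) := by
  obtain ⟨hδ0, hδ1⟩ := hδ
  have hTW : MeasurableSpace.comap (fun ω => T (W ω)) inferInstance
      ≤ MeasurableSpace.comap W inferInstance := (hT.comp (comap_measurable W)).comap_le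
  have hQTW : Measurable[MeasurableSpace.comap W inferInstance] QT := hQTmeas.mono hTW le_rfl
  have hm₁₂ : MeasurableSpace.comap QT inferInstance
      ≤ MeasurableSpace.comap (fun ω => (QT ω, Q₀ ω)) inferInstance :=
    Measurable.comap_le (measurable_fst.comp (comap_measurable (fun ω => (QT ω, Q₀ ω))))
  have hm₂ : MeasurableSpace.comap (fun ω => (QT ω, Q₀ ω)) inferInstance ≤ ‹MeasurableSpace Ω› :=
    (hQTW.prodMk hQ₀meas).comap_le.trans hW.comap_le
  have hD : Measurable[MeasurableSpace.comap (fun ω => (QT ω, Q₀ ω)) inferInstance] (QT - Q₀) :=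
    (measurable_fst.sub measurable_snd).comp (comap_measurable _)
  have hL : ∀ p (Q : Ω → ℝ), Measurable Q → (∀ ω, Q ω ∈ Set.Icc (0:ℝ) 1) → MemLp Q p P :=
    fun _ Q hQ hQ01 => memLp_of_mem_Icc hQ.aestronglyMeasurable hQ01
  have hAL p := hL p A hA fun ω => by rcases hAbin ω with h | h <;> simp [h]
  have hYL p := hL p Y hY hYrange
  have hQ₀L p := hL p Q₀ (hQ₀meas.mono hW.comap_le le_rfl) hQ₀range
  have hQTL p := hL p QT (hQTW.mono hW.comap_le le_rfl) hQTrange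
  have horth : WeightedOrthogonal P (MeasurableSpace.comap QT inferInstance) A (QT - Q₀) := by
    have h := WeightedOrthogonal.sub (hm₁₂.trans hm₂) (hAL ⊤) ((hYL ⊤).sub (hQ₀L ⊤))
      ((hYL ⊤).sub (hQTL ⊤))
      ((show WeightedOrthogonal P _ A (Y - Q₀) from hQ₀orth).mono (hQTmeas.comap_le.trans hTW))
      ((show WeightedOrthogonal P _ A (Y - QT) from hQTorth).mono hQTmeas.comap_le)
    rwa [sub_sub_sub_cancel_left] at h
  calc |(∫ ω, QT ω ∂P) - (∫ ω, Q₀ ω ∂P)| = |∫ ω, (QT ω - Q₀ ω) ∂P| := by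
        rw [← integral_sub ((hQTL 1).integrable le_rfl) ((hQ₀L 1).integrable le_rfl)]
    _ ≤ δ⁻¹ * √(∫ ω, (Hstar ω - H ω) ^ 2 ∂P) * √(∫ ω, (QT ω - Q₀ ω) ^ 2 ∂P) :=
        horth.abs_integral_le hm₁₂ hm₂ hδ0 (hAL 2) hD ((hQTL 2).sub (hQ₀L 2)) hH hHstar hHpos
    _ ≤ (δ ^ 2)⁻¹ * √(∫ ω, (Hstar ω - H ω) ^ 2 ∂P) * √(∫ ω, (QT ω - Q₀ ω) ^ 2 ∂P) := by
        gcongr ?_ * _ * _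
        exact inv_anti₀ (by positivity) (by nlinarith)

/-- Deterministic core of the paper's lemma on the second-order bias of the oracle
estimator for the treatment-specific mean: with `H` a version of `E[A | σ(Q_T)]` and
`H*` a version of `E[A | σ(Q_T, Q₀)]`, both bounded below by `δ`,
`|Ψ(Q_T) − Ψ(Q₀)| ≤ δ⁻² ‖H* − H‖_{L²(P)} ‖Q_T − Q₀‖_{L²(P)}`. -/
theorem stmt_14
    {Ω 𝒲 : Type*} [MeasurableSpace Ω] [MeasurableSpace 𝒲]
    (P : Measure Ω) [IsProbabilityMeasure P]
    (W : Ω → 𝒲) (A Y G₀ Q₀ : Ω → ℝ)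
    (hW : Measurable W) (hA : Measurable A) (hY : Measurable Y)
    (hAbin : ∀ ω, A ω = 0 ∨ A ω = 1)
    (hYrange : ∀ ω, Y ω ∈ Set.Icc (0:ℝ) 1)
    (hG₀ : G₀ =ᵐ[P] P[A|MeasurableSpace.comap W inferInstance])
    (δ : ℝ) (hδ : δ ∈ Set.Ioo (0:ℝ) 1)
    (hpos : ∀ᵐ ω ∂P, δ ≤ G₀ ω)
    (hQ₀meas : Measurable[MeasurableSpace.comap W inferInstance] Q₀)
    (hQ₀range : ∀ ω, Q₀ ω ∈ Set.Icc (0:ℝ) 1)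
    (hQ₀orth : ∀ f : Ω → ℝ, Measurable[MeasurableSpace.comap W inferInstance] f →
      (∃ C : ℝ, ∀ ω, |f ω| ≤ C) →
      ∫ ω, A ω * (Y ω - Q₀ ω) * f ω ∂P = 0)
    {J : ℕ} (T : 𝒲 → (Fin J → ℝ)) (hT : Measurable T)
    (QT : Ω → ℝ)
    (hQTmeas : Measurable[MeasurableSpace.comap (fun ω => T (W ω)) inferInstance] QT)
    (hQTrange : ∀ ω, QT ω ∈ Set.Icc (0:ℝ) 1)
    (hQTorth : ∀ f : Ω → ℝ,
      Measurable[MeasurableSpace.comap (fun ω => T (W ω)) inferInstance] f →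
      (∃ C : ℝ, ∀ ω, |f ω| ≤ C) →
      ∫ ω, A ω * (Y ω - QT ω) * f ω ∂P = 0)
    (H Hstar : Ω → ℝ)
    (hH : H =ᵐ[P] P[A|MeasurableSpace.comap QT inferInstance])
    (hHstar : Hstar =ᵐ[P]
      P[A|MeasurableSpace.comap (fun ω => (QT ω, Q₀ ω)) inferInstance])
    (hHpos : ∀ᵐ ω ∂P, δ ≤ H ω)
    (hHstarpos : ∀ᵐ ω ∂P, δ ≤ Hstar ω) :
    |(∫ ω, QT ω ∂P) - (∫ ω, Q₀ ω ∂P)|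
      ≤ (δ ^ 2)⁻¹ * Real.sqrt (∫ ω, (Hstar ω - H ω) ^ 2 ∂P)
          * Real.sqrt (∫ ω, (QT ω - Q₀ ω) ^ 2 ∂P) :=
  stmt_14_general P W A Y Q₀ hW hA hY hAbin hYrange δ hδ hQ₀meas hQ₀range hQ₀orth T hT QT hQTmeas
    hQTrange hQTorth H Hstar hH hHstar hHpos
end

section
/- Second-order bias of the oracle estimator (deterministic conclusion of the paper's lemma for the treatment-specific mean): let H be a version of E[A | σ(Q_T)] and H* a version of E[A | σ(Q_T, Q₀)], and assume H ≥ δ, H* ≥ δ, and G₀ ≥ δ P-a.s.; moreover suppose there is a jointly measurable g : ℝ × ℝ → ℝ with H* = g(Q_T, Q₀) P-a.s. and |g(x, y) − g(x, y′)| ≤ C·|y − y′| for all x, y, y′ ∈ ℝ. Then |Ψ(Q_T) − Ψ(Q₀)| ≤ C·δ^{−2}·E[(Q_T − Q₀)²]; that is, the bias of the oracle-ensemble plug-in is bounded by a constant times the squared L²(P) distance between the oracle ensemble and the true regression. -/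
/-!
Write `E = E[Q₀ | σ(Q_T)]` and `f = 1 / E[A | σ(Q_T)]`. Testing both orthogonality conditions
against the σ(Q_T)-measurable weight `f` and using the tower property gives
`Ψ(Q_T) − Ψ(Q₀) = E[(Q₀ − E) f A] = E[(Q₀ − E) f H*]`. Since `Q₀ − E` is orthogonal to every
bounded σ(Q_T)-measurable function, `H*` may be replaced by `H* − g(Q_T, E)`, which the Lipschitz
condition bounds by `C |Q₀ − E|`. Hence the bias is at most `C δ⁻¹ E[(Q₀ − E)²]`, and
`E[(Q₀ − E)²] ≤ E[(Q_T − Q₀)²]` because the conditional expectation is the L² projection onto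
σ(Q_T)-measurable functions.
-/

open MeasureTheory
open scoped ENNReal

section

variable {Ω : Type*} {m m' m₁ m₂ mΩ : MeasurableSpace Ω} {P : Measure Ω}

section ConditionalExpectation

variable [IsFiniteMeasure P]

theorem integral_mul_condExp_of_stronglyMeasurable_s16 (hm : m ≤ mΩ) {ψ φ : Ω → ℝ}
    (hψ : StronglyMeasurable[m] ψ) (hψ_bdd : MemLp ψ ∞ P) (hφ : Integrable φ P) :
    ∫ ω, ψ ω * φ ω ∂P = ∫ ω, ψ ω * P[φ|m] ω ∂P := by
  rw [← integral_condExp hm]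
  exact integral_congr_ae
    (condExp_mul_of_stronglyMeasurable_left hψ (hφ.mul_of_top_right hψ_bdd) hφ)

theorem integral_mul_sub_condExp_eq_zero (hm : m ≤ mΩ) {ψ X : Ω → ℝ}
    (hψ : StronglyMeasurable[m] ψ) (hψ_bdd : MemLp ψ ∞ P) (hX : Integrable X P) :
    ∫ ω, ψ ω * (X ω - P[X|m] ω) ∂P = 0 := by
  simp_rw [mul_sub]
  rw [integral_sub (by exact hX.mul_of_top_right hψ_bdd)
      (by exact integrable_condExp.mul_of_top_right hψ_bdd),
    integral_mul_condExp_of_stronglyMeasurable_s16 hm hψ hψ_bdd hX, sub_self]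

theorem integral_sq_sub_condExp_le (hm : m ≤ mΩ) {X Z : Ω → ℝ} (hX : MemLp X ∞ P)
    (hZ : StronglyMeasurable[m] Z) (hZ_bdd : MemLp Z ∞ P) :
    ∫ ω, (X ω - P[X|m] ω) ^ 2 ∂P ≤ ∫ ω, (Z ω - X ω) ^ 2 ∂P := by
  have hE : MemLp (P[X|m]) ∞ P := hX.condExp le_top
  have hXE : MemLp (fun ω => X ω - P[X|m] ω) ∞ P := hX.sub hE
  have hZE : MemLp (fun ω => Z ω - P[X|m] ω) ∞ P := hZ_bdd.sub hE
  have hcross : ∫ ω, (Z ω - P[X|m] ω) * (X ω - P[X|m] ω) ∂P = 0 :=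
    integral_mul_sub_condExp_eq_zero hm (hZ.sub stronglyMeasurable_condExp) hZE
      (hX.integrable le_top)
  have hXE_sq := (hXE.mono_exponent le_top).integrable_sq
  have hZE_sq := (hZE.mono_exponent le_top).integrable_sq
  have hexpand : ∫ ω, (Z ω - X ω) ^ 2 ∂P
      = ∫ ω, (X ω - P[X|m] ω) ^ 2 ∂P + ∫ ω, (Z ω - P[X|m] ω) ^ 2 ∂P
        - 2 * ∫ ω, (Z ω - P[X|m] ω) * (X ω - P[X|m] ω) ∂P := by
    rw [← integral_add hXE_sq hZE_sq, ← integral_const_mul,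
      ← integral_sub (by exact hXE_sq.add hZE_sq)
        (by exact ((hXE.mul' hZE).integrable le_top).const_mul 2)]
    exact integral_congr_ae (.of_forall fun ω => by ring)
  have hZE_nonneg : 0 ≤ ∫ ω, (Z ω - P[X|m] ω) ^ 2 ∂P := integral_nonneg fun ω => sq_nonneg _
  rw [hexpand, hcross]
  linarith

end ConditionalExpectation

/-- Clipping at `δ` keeps the weight `1 / h` bounded everywhere, as the orthogonality conditions
demand of their test functions, without changing it where `δ ≤ h`. -/
noncomputable def clippedInv (δ : ℝ) (h : Ω → ℝ) (ω : Ω) : ℝ := (max (h ω) δ)⁻¹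

section clippedInv

variable {δ : ℝ} {h : Ω → ℝ}

theorem abs_clippedInv_le (hδ : 0 < δ) (ω : Ω) : |clippedInv δ h ω| ≤ δ⁻¹ := by
  have hmax : 0 < max (h ω) δ := hδ.trans_le (le_max_right _ _)
  rw [clippedInv, abs_of_pos (inv_pos.mpr hmax)]
  exact inv_anti₀ hδ (le_max_right _ _)

theorem clippedInv_mul_cancel {ω : Ω} (hδ : 0 < δ) (hω : δ ≤ h ω) :
    clippedInv δ h ω * h ω = 1 := by
  rw [clippedInv, max_eq_left hω]
  exact inv_mul_cancel₀ (hδ.trans_le hω).ne'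

theorem stronglyMeasurable_clippedInv (hh : StronglyMeasurable[m] h) :
    StronglyMeasurable[m] (clippedInv δ h) :=
  (hh.measurable.max measurable_const).inv.stronglyMeasurable

theorem memLp_top_clippedInv (hm : m ≤ mΩ) (hh : StronglyMeasurable[m] h) (hδ : 0 < δ) :
    MemLp (clippedInv δ h) ∞ P :=
  memLp_top_of_bound ((stronglyMeasurable_clippedInv hh).mono hm).aestronglyMeasurable δ⁻¹
    (.of_forall (abs_clippedInv_le hδ))

end clippedInv

theorem memLp_top_comp_of_lipschitz_snd {g : ℝ × ℝ → ℝ} {C : ℝ}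
    (hLip : ∀ x y y' : ℝ, |g (x, y) - g (x, y')| ≤ C * |y - y'|) {X Y Y' : Ω → ℝ}
    (hgY : MemLp (fun ω => g (X ω, Y ω)) ∞ P)
    (hgY'_meas : AEStronglyMeasurable (fun ω => g (X ω, Y' ω)) P)
    (hYY' : MemLp (fun ω => Y ω - Y' ω) ∞ P) :
    MemLp (fun ω => g (X ω, Y' ω)) ∞ P := by
  have hdiff : MemLp (fun ω => g (X ω, Y ω) - g (X ω, Y' ω)) ∞ P :=
    (hYY'.const_mul C).of_le (hgY.1.sub hgY'_meas) (.of_forall fun ω => by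
      simp only [Real.norm_eq_abs, abs_mul]
      exact (hLip _ _ _).trans (mul_le_mul_of_nonneg_right (le_abs_self C) (abs_nonneg _)))
  exact (hgY.sub hdiff).ae_eq (.of_forall fun ω => sub_sub_cancel _ _)

theorem memLp_top_of_forall_mem_Icc {f : Ω → ℝ} (hf : Measurable f)
    (hf_mem : ∀ ω, f ω ∈ Set.Icc (0 : ℝ) 1) : MemLp f ∞ P :=
  memLp_top_of_bound hf.aestronglyMeasurable 1 (.of_forall fun ω => by
    rw [Real.norm_eq_abs, abs_le]
    exact ⟨by linarith [(hf_mem ω).1], (hf_mem ω).2⟩)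

section Bias

variable [IsFiniteMeasure P] {A Q₀ QT : Ω → ℝ} {δ : ℝ}

theorem integral_mul_clippedInv_condExp_mul (hm : m ≤ mΩ) {ψ : Ω → ℝ} (hδ : 0 < δ)
    (hA : Integrable A P) (hpos : ∀ᵐ ω ∂P, δ ≤ P[A|m] ω)
    (hψ : StronglyMeasurable[m] ψ) (hψ_bdd : MemLp ψ ∞ P) :
    ∫ ω, ψ ω * clippedInv δ (P[A|m]) ω * A ω ∂P = ∫ ω, ψ ω ∂P := by
  have hf : MemLp (clippedInv δ (P[A|m])) ∞ P :=
    memLp_top_clippedInv hm stronglyMeasurable_condExp hδ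
  rw [integral_mul_condExp_of_stronglyMeasurable_s16 (ψ := fun ω => ψ ω * clippedInv δ (P[A|m]) ω)
    hm (hψ.mul (stronglyMeasurable_clippedInv stronglyMeasurable_condExp)) (hf.mul hψ_bdd) hA]
  refine integral_congr_ae ?_
  filter_upwards [hpos] with ω hω
  rw [mul_assoc, clippedInv_mul_cancel hδ hω, mul_one]

theorem integral_mul_sub_mul_eq_zero_of_orthogonal {Y Q Q' : Ω → ℝ}
    (hm₁ : m₁ ≤ mΩ) (hA : MemLp A ∞ P) (hY : MemLp Y ∞ P) (hQ : MemLp Q ∞ P)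
    (hQ' : MemLp Q' ∞ P) (hm : m₁ ≤ m) (hm' : m₁ ≤ m')
    (horth : ∀ ψ : Ω → ℝ, Measurable[m] ψ → (∃ c, ∀ ω, |ψ ω| ≤ c) →
      ∫ ω, A ω * (Y ω - Q ω) * ψ ω ∂P = 0)
    (horth' : ∀ ψ : Ω → ℝ, Measurable[m'] ψ → (∃ c, ∀ ω, |ψ ω| ≤ c) →
      ∫ ω, A ω * (Y ω - Q' ω) * ψ ω ∂P = 0)
    {ψ : Ω → ℝ} (hψ : StronglyMeasurable[m₁] ψ) (hψ_bdd : ∃ c, ∀ ω, |ψ ω| ≤ c) :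
    ∫ ω, A ω * (Q ω - Q' ω) * ψ ω ∂P = 0 := by
  obtain ⟨c, hc⟩ := hψ_bdd
  have hψ_top : MemLp ψ ∞ P :=
    memLp_top_of_bound (hψ.mono hm₁).aestronglyMeasurable c (.of_forall hc)
  have hint : ∀ {Q'' : Ω → ℝ}, MemLp Q'' ∞ P →
      Integrable (fun ω => A ω * (Y ω - Q'' ω) * ψ ω) P := fun hQ'' =>
    (hψ_top.mul' ((hY.sub hQ'').mul' hA : MemLp _ ∞ P)).integrable le_top
  calc ∫ ω, A ω * (Q ω - Q' ω) * ψ ω ∂P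
      = ∫ ω, A ω * (Y ω - Q' ω) * ψ ω ∂P - ∫ ω, A ω * (Y ω - Q ω) * ψ ω ∂P := by
        rw [← integral_sub (hint hQ') (hint hQ)]
        exact integral_congr_ae (.of_forall fun ω => by ring)
    _ = 0 := by
        rw [horth' ψ (hψ.measurable.mono hm' le_rfl) ⟨c, hc⟩,
          horth ψ (hψ.measurable.mono hm le_rfl) ⟨c, hc⟩, sub_self]

theorem integral_sub_integral_eq_integral_mul_clippedInv (hm₁ : m₁ ≤ mΩ) (hδ : 0 < δ)
    (hA : MemLp A ∞ P) (hQ₀_bdd : MemLp Q₀ ∞ P) (hQT : StronglyMeasurable[m₁] QT)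
    (hQT_bdd : MemLp QT ∞ P) (hpos : ∀ᵐ ω ∂P, δ ≤ P[A|m₁] ω)
    (horth : ∀ ψ : Ω → ℝ, StronglyMeasurable[m₁] ψ → (∃ c, ∀ ω, |ψ ω| ≤ c) →
      ∫ ω, A ω * (Q₀ ω - QT ω) * ψ ω ∂P = 0) :
    ∫ ω, QT ω ∂P - ∫ ω, Q₀ ω ∂P
      = ∫ ω, (Q₀ ω - P[Q₀|m₁] ω) * clippedInv δ (P[A|m₁]) ω * A ω ∂P := by
  set f := clippedInv δ (P[A|m₁])
  have hf : MemLp f ∞ P := memLp_top_clippedInv hm₁ stronglyMeasurable_condExp hδ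
  have hE : MemLp (P[Q₀|m₁]) ∞ P := hQ₀_bdd.condExp le_top
  have horth_f : ∫ ω, A ω * (Q₀ ω - QT ω) * f ω ∂P = 0 :=
    horth f (stronglyMeasurable_clippedInv stronglyMeasurable_condExp)
      ⟨δ⁻¹, abs_clippedInv_le hδ⟩
  have hweighted : ∫ ω, (QT ω - P[Q₀|m₁] ω) * f ω * A ω ∂P
      = ∫ ω, QT ω ∂P - ∫ ω, Q₀ ω ∂P := by
    rw [integral_mul_clippedInv_condExp_mul (ψ := fun ω => QT ω - P[Q₀|m₁] ω) hm₁ hδ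
      (hA.integrable le_top) hpos (hQT.sub stronglyMeasurable_condExp) (hQT_bdd.sub hE),
      integral_sub (hQT_bdd.integrable le_top) integrable_condExp, integral_condExp hm₁]
  have hsplit : ∫ ω, (Q₀ ω - P[Q₀|m₁] ω) * f ω * A ω ∂P
      = ∫ ω, A ω * (Q₀ ω - QT ω) * f ω ∂P
        + ∫ ω, (QT ω - P[Q₀|m₁] ω) * f ω * A ω ∂P := by
    have hD : MemLp (fun ω => A ω * (Q₀ ω - QT ω)) ∞ P := (hQ₀_bdd.sub hQT_bdd).mul' hA
    have hD' : MemLp (fun ω => (QT ω - P[Q₀|m₁] ω) * f ω) ∞ P := hf.mul' (hQT_bdd.sub hE)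
    rw [← integral_add ((hf.mul' hD).integrable le_top) ((hA.mul' hD').integrable le_top)]
    exact integral_congr_ae (.of_forall fun ω => by ring)
  rw [hsplit, horth_f, hweighted, zero_add]

theorem integral_sub_integral_eq_integral_mul_condExp_sub (hm₁₂ : m₁ ≤ m₂) (hm₂ : m₂ ≤ mΩ)
    (hδ : 0 < δ) (hA : MemLp A ∞ P) (hQ₀ : StronglyMeasurable[m₂] Q₀) (hQ₀_bdd : MemLp Q₀ ∞ P)
    (hQT : StronglyMeasurable[m₁] QT) (hQT_bdd : MemLp QT ∞ P)
    (hpos : ∀ᵐ ω ∂P, δ ≤ P[A|m₁] ω)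
    (horth : ∀ ψ : Ω → ℝ, StronglyMeasurable[m₁] ψ → (∃ c, ∀ ω, |ψ ω| ≤ c) →
      ∫ ω, A ω * (Q₀ ω - QT ω) * ψ ω ∂P = 0)
    {φ : Ω → ℝ} (hφ : StronglyMeasurable[m₁] φ) (hφ_bdd : MemLp φ ∞ P) :
    ∫ ω, QT ω ∂P - ∫ ω, Q₀ ω ∂P
      = ∫ ω, (Q₀ ω - P[Q₀|m₁] ω) * clippedInv δ (P[A|m₁]) ω * (P[A|m₂] ω - φ ω) ∂P := by
  have hm₁ : m₁ ≤ mΩ := hm₁₂.trans hm₂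
  set f := clippedInv δ (P[A|m₁])
  have hf₁ : StronglyMeasurable[m₁] f := stronglyMeasurable_clippedInv stronglyMeasurable_condExp
  have hf : MemLp f ∞ P := memLp_top_clippedInv hm₁ stronglyMeasurable_condExp hδ
  have hQ₀E : MemLp (fun ω => Q₀ ω - P[Q₀|m₁] ω) ∞ P := hQ₀_bdd.sub (hQ₀_bdd.condExp le_top)
  have hD : MemLp (fun ω => (Q₀ ω - P[Q₀|m₁] ω) * f ω) ∞ P := hf.mul' hQ₀E
  have hD₂ : StronglyMeasurable[m₂] (fun ω => (Q₀ ω - P[Q₀|m₁] ω) * f ω) :=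
    (hQ₀.sub (stronglyMeasurable_condExp.mono hm₁₂)).mul (hf₁.mono hm₁₂)
  have hfφ : MemLp (fun ω => f ω * φ ω) ∞ P := hφ_bdd.mul' hf
  have hφ_orth : ∫ ω, f ω * φ ω * (Q₀ ω - P[Q₀|m₁] ω) ∂P = 0 :=
    integral_mul_sub_condExp_eq_zero (ψ := fun ω => f ω * φ ω) hm₁ (hf₁.mul hφ)
      hfφ (hQ₀_bdd.integrable le_top)
  calc ∫ ω, QT ω ∂P - ∫ ω, Q₀ ω ∂P
      = ∫ ω, (Q₀ ω - P[Q₀|m₁] ω) * f ω * P[A|m₂] ω ∂P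
        - ∫ ω, f ω * φ ω * (Q₀ ω - P[Q₀|m₁] ω) ∂P := by
        rw [integral_sub_integral_eq_integral_mul_clippedInv hm₁ hδ hA hQ₀_bdd hQT hQT_bdd hpos
          horth, integral_mul_condExp_of_stronglyMeasurable_s16 hm₂ hD₂ hD (hA.integrable le_top),
          hφ_orth, sub_zero]
    _ = _ := by
        rw [← integral_sub (((hA.condExp le_top).mul' hD).integrable le_top)
          ((hQ₀E.mul' hfφ).integrable le_top)]
        exact integral_congr_ae (.of_forall fun ω => by ring)

theorem abs_integral_sub_le_of_lipschitz_condExp (hm₁₂ : m₁ ≤ m₂) (hm₂ : m₂ ≤ mΩ)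
    (hδ : 0 < δ) (hA : MemLp A ∞ P) (hQ₀ : StronglyMeasurable[m₂] Q₀) (hQ₀_bdd : MemLp Q₀ ∞ P)
    (hQT : StronglyMeasurable[m₁] QT) (hQT_bdd : MemLp QT ∞ P)
    (hpos : ∀ᵐ ω ∂P, δ ≤ P[A|m₁] ω)
    (horth : ∀ ψ : Ω → ℝ, StronglyMeasurable[m₁] ψ → (∃ c, ∀ ω, |ψ ω| ≤ c) →
      ∫ ω, A ω * (Q₀ ω - QT ω) * ψ ω ∂P = 0)
    {g : ℝ × ℝ → ℝ} {C : ℝ} (hg : Measurable g)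
    (hgA : P[A|m₂] =ᵐ[P] fun ω => g (QT ω, Q₀ ω))
    (hLip : ∀ x y y' : ℝ, |g (x, y) - g (x, y')| ≤ C * |y - y'|) :
    |∫ ω, QT ω ∂P - ∫ ω, Q₀ ω ∂P| ≤ C * δ⁻¹ * ∫ ω, (QT ω - Q₀ ω) ^ 2 ∂P := by
  have hm₁ : m₁ ≤ mΩ := hm₁₂.trans hm₂
  have hC : 0 ≤ C := by simpa using (abs_nonneg _).trans (hLip 0 1 0)
  have hgE₁ : StronglyMeasurable[m₁] (fun ω => g (QT ω, P[Q₀|m₁] ω)) :=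
    (hg.comp (hQT.measurable.prodMk stronglyMeasurable_condExp.measurable)).stronglyMeasurable
  have hgE : MemLp (fun ω => g (QT ω, P[Q₀|m₁] ω)) ∞ P :=
    memLp_top_comp_of_lipschitz_snd hLip ((hA.condExp le_top).ae_eq hgA)
      (hgE₁.mono hm₁).aestronglyMeasurable (hQ₀_bdd.sub (hQ₀_bdd.condExp le_top))
  have hbound : ∀ᵐ ω ∂P, ‖(Q₀ ω - P[Q₀|m₁] ω) * clippedInv δ (P[A|m₁]) ω
      * (P[A|m₂] ω - g (QT ω, P[Q₀|m₁] ω))‖ ≤ C * δ⁻¹ * (Q₀ ω - P[Q₀|m₁] ω) ^ 2 := by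
    filter_upwards [hgA] with ω hω
    rw [hω, Real.norm_eq_abs, abs_mul, abs_mul, ← sq_abs]
    calc _ ≤ |Q₀ ω - P[Q₀|m₁] ω| * δ⁻¹ * (C * |Q₀ ω - P[Q₀|m₁] ω|) := by
          gcongr
          · exact abs_clippedInv_le hδ ω
          · exact hLip _ _ _
      _ = C * δ⁻¹ * |Q₀ ω - P[Q₀|m₁] ω| ^ 2 := by ring
  have hsq_int : Integrable (fun ω => (Q₀ ω - P[Q₀|m₁] ω) ^ 2) P :=
    ((hQ₀_bdd.sub (hQ₀_bdd.condExp le_top)).mono_exponent le_top).integrable_sq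
  calc |∫ ω, QT ω ∂P - ∫ ω, Q₀ ω ∂P|
      ≤ ∫ ω, C * δ⁻¹ * (Q₀ ω - P[Q₀|m₁] ω) ^ 2 ∂P := by
        rw [integral_sub_integral_eq_integral_mul_condExp_sub hm₁₂ hm₂ hδ hA hQ₀ hQ₀_bdd hQT
          hQT_bdd hpos horth hgE₁ hgE, ← Real.norm_eq_abs]
        exact norm_integral_le_of_norm_le (hsq_int.const_mul _) hbound
    _ = C * δ⁻¹ * ∫ ω, (Q₀ ω - P[Q₀|m₁] ω) ^ 2 ∂P := integral_const_mul _ _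
    _ ≤ C * δ⁻¹ * ∫ ω, (QT ω - Q₀ ω) ^ 2 ∂P :=
        mul_le_mul_of_nonneg_left (integral_sq_sub_condExp_le hm₁ hQ₀_bdd hQT hQT_bdd)
          (by positivity)

end Bias

end

theorem stmt_16_general
    {Ω 𝒲 : Type*} [MeasurableSpace Ω] [MeasurableSpace 𝒲]
    (P : Measure Ω) [IsProbabilityMeasure P]
    (W : Ω → 𝒲) (A Y Q₀ : Ω → ℝ)
    (hW : Measurable W) (hA : Measurable A) (hY : Measurable Y)
    (hAbin : ∀ ω, A ω = 0 ∨ A ω = 1)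
    (hYrange : ∀ ω, Y ω ∈ Set.Icc (0:ℝ) 1)
    (δ : ℝ) (hδ : δ ∈ Set.Ioo (0:ℝ) 1)
    (hQ₀meas : Measurable[MeasurableSpace.comap W inferInstance] Q₀)
    (hQ₀range : ∀ ω, Q₀ ω ∈ Set.Icc (0:ℝ) 1)
    (hQ₀orth : ∀ f : Ω → ℝ, Measurable[MeasurableSpace.comap W inferInstance] f →
      (∃ C : ℝ, ∀ ω, |f ω| ≤ C) →
      ∫ ω, A ω * (Y ω - Q₀ ω) * f ω ∂P = 0)
    {J : ℕ} (T : 𝒲 → (Fin J → ℝ)) (hT : Measurable T)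
    (QT : Ω → ℝ)
    (hQTmeas : Measurable[MeasurableSpace.comap (fun ω => T (W ω)) inferInstance] QT)
    (hQTrange : ∀ ω, QT ω ∈ Set.Icc (0:ℝ) 1)
    (hQTorth : ∀ f : Ω → ℝ,
      Measurable[MeasurableSpace.comap (fun ω => T (W ω)) inferInstance] f →
      (∃ C : ℝ, ∀ ω, |f ω| ≤ C) →
      ∫ ω, A ω * (Y ω - QT ω) * f ω ∂P = 0)
    (H Hstar : Ω → ℝ)
    (hH : H =ᵐ[P] P[A|MeasurableSpace.comap QT inferInstance])
    (hHstar : Hstar =ᵐ[P]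
      P[A|MeasurableSpace.comap (fun ω => (QT ω, Q₀ ω)) inferInstance])
    (hHpos : ∀ᵐ ω ∂P, δ ≤ H ω)
    (C : ℝ) (hC : 0 ≤ C)
    (g : ℝ × ℝ → ℝ) (hg : Measurable g)
    (hgver : Hstar =ᵐ[P] fun ω => g (QT ω, Q₀ ω))
    (hLip : ∀ x y y' : ℝ, |g (x, y) - g (x, y')| ≤ C * |y - y'|) :
    |(∫ ω, QT ω ∂P) - (∫ ω, Q₀ ω ∂P)|
      ≤ C * (δ ^ 2)⁻¹ * ∫ ω, (QT ω - Q₀ ω) ^ 2 ∂P := by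
  have hmW : MeasurableSpace.comap W inferInstance ≤ ‹MeasurableSpace Ω› := hW.comap_le
  have hmTW : MeasurableSpace.comap (fun ω => T (W ω)) inferInstance
      ≤ MeasurableSpace.comap W inferInstance := (hT.comp (comap_measurable W)).comap_le
  have hm₁T : MeasurableSpace.comap QT inferInstance
      ≤ MeasurableSpace.comap (fun ω => T (W ω)) inferInstance := hQTmeas.comap_le
  have hpair : Measurable[MeasurableSpace.comap (fun ω => (QT ω, Q₀ ω)) inferInstance]
      fun ω => (QT ω, Q₀ ω) := comap_measurable _
  have hQT : Measurable QT := hQTmeas.mono (hmTW.trans hmW) le_rfl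
  have hQ₀ : Measurable Q₀ := hQ₀meas.mono hmW le_rfl
  have hA_bdd : MemLp A ∞ P := memLp_top_of_forall_mem_Icc hA fun ω => by
    rcases hAbin ω with h | h <;> simp [h]
  have hQ₀_bdd : MemLp Q₀ ∞ P := memLp_top_of_forall_mem_Icc hQ₀ hQ₀range
  have hQT_bdd : MemLp QT ∞ P := memLp_top_of_forall_mem_Icc hQT hQTrange
  have horth : ∀ ψ : Ω → ℝ, StronglyMeasurable[MeasurableSpace.comap QT inferInstance] ψ →
      (∃ c, ∀ ω, |ψ ω| ≤ c) → ∫ ω, A ω * (Q₀ ω - QT ω) * ψ ω ∂P = 0 := fun ψ =>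
    integral_mul_sub_mul_eq_zero_of_orthogonal (hm₁T.trans (hmTW.trans hmW)) hA_bdd
      (memLp_top_of_forall_mem_Icc hY hYrange) hQ₀_bdd hQT_bdd (hm₁T.trans hmTW) hm₁T
      hQ₀orth hQTorth
  have hpos : ∀ᵐ ω ∂P, δ ≤ P[A|MeasurableSpace.comap QT inferInstance] ω := by
    filter_upwards [hH, hHpos] with ω hω hδω
    exact hω ▸ hδω
  have hbias := abs_integral_sub_le_of_lipschitz_condExp
    (measurable_fst.comp hpair).comap_le (hQT.prodMk hQ₀).comap_le hδ.1 hA_bdd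
    (measurable_snd.comp hpair).stronglyMeasurable hQ₀_bdd
    (comap_measurable QT).stronglyMeasurable hQT_bdd hpos horth hg (hHstar.symm.trans hgver) hLip
  have hδ_inv : δ⁻¹ ≤ (δ ^ 2)⁻¹ := inv_anti₀ (by nlinarith [hδ.1]) (by nlinarith [hδ.1, hδ.2])
  exact hbias.trans (mul_le_mul_of_nonneg_right (mul_le_mul_of_nonneg_left hδ_inv hC)
    (integral_nonneg fun ω => sq_nonneg _))

/-- Second-order bias of the oracle estimator (deterministic conclusion of the paper's
lemma for the treatment-specific mean): under the positivity and Lipschitz-coarsening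
conditions, `|Ψ(Q_T) − Ψ(Q₀)| ≤ C δ⁻² E[(Q_T − Q₀)²]`. -/
theorem stmt_16
    {Ω 𝒲 : Type*} [MeasurableSpace Ω] [MeasurableSpace 𝒲]
    (P : Measure Ω) [IsProbabilityMeasure P]
    (W : Ω → 𝒲) (A Y G₀ Q₀ : Ω → ℝ)
    (hW : Measurable W) (hA : Measurable A) (hY : Measurable Y)
    (hAbin : ∀ ω, A ω = 0 ∨ A ω = 1)
    (hYrange : ∀ ω, Y ω ∈ Set.Icc (0:ℝ) 1)
    (hG₀ : G₀ =ᵐ[P] P[A|MeasurableSpace.comap W inferInstance])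
    (δ : ℝ) (hδ : δ ∈ Set.Ioo (0:ℝ) 1)
    (hpos : ∀ᵐ ω ∂P, δ ≤ G₀ ω)
    (hQ₀meas : Measurable[MeasurableSpace.comap W inferInstance] Q₀)
    (hQ₀range : ∀ ω, Q₀ ω ∈ Set.Icc (0:ℝ) 1)
    (hQ₀orth : ∀ f : Ω → ℝ, Measurable[MeasurableSpace.comap W inferInstance] f →
      (∃ C : ℝ, ∀ ω, |f ω| ≤ C) →
      ∫ ω, A ω * (Y ω - Q₀ ω) * f ω ∂P = 0)
    {J : ℕ} (T : 𝒲 → (Fin J → ℝ)) (hT : Measurable T)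
    (QT : Ω → ℝ)
    (hQTmeas : Measurable[MeasurableSpace.comap (fun ω => T (W ω)) inferInstance] QT)
    (hQTrange : ∀ ω, QT ω ∈ Set.Icc (0:ℝ) 1)
    (hQTorth : ∀ f : Ω → ℝ,
      Measurable[MeasurableSpace.comap (fun ω => T (W ω)) inferInstance] f →
      (∃ C : ℝ, ∀ ω, |f ω| ≤ C) →
      ∫ ω, A ω * (Y ω - QT ω) * f ω ∂P = 0)
    (H Hstar : Ω → ℝ)
    (hH : H =ᵐ[P] P[A|MeasurableSpace.comap QT inferInstance])
    (hHstar : Hstar =ᵐ[P]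
      P[A|MeasurableSpace.comap (fun ω => (QT ω, Q₀ ω)) inferInstance])
    (hHpos : ∀ᵐ ω ∂P, δ ≤ H ω)
    (hHstarpos : ∀ᵐ ω ∂P, δ ≤ Hstar ω)
    (C : ℝ) (hC : 0 ≤ C)
    (g : ℝ × ℝ → ℝ) (hg : Measurable g)
    (hgver : Hstar =ᵐ[P] fun ω => g (QT ω, Q₀ ω))
    (hLip : ∀ x y y' : ℝ, |g (x, y) - g (x, y')| ≤ C * |y - y'|) :
    |(∫ ω, QT ω ∂P) - (∫ ω, Q₀ ω ∂P)|
      ≤ C * (δ ^ 2)⁻¹ * ∫ ω, (QT ω - Q₀ ω) ^ 2 ∂P :=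
  stmt_16_general P W A Y Q₀ hW hA hY hAbin hYrange δ hδ hQ₀meas hQ₀range hQ₀orth T hT QT hQTmeas
    hQTrange hQTorth H Hstar hH hHstar hHpos C hC g hg hgver hLip
end
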